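/- arXiv:2205.06493 — 13 statements merged into one kernel-verified Lean document; each statement's English description precedes it below -/
import Mathlib

section
/- Let X and Y be real Hilbert spaces, let R : X → ℝ be nonnegative, convex, coercive and weakly sequentially lower semicontinuous, let y ∈ Y with y ≠ 0 and let α > 0. Then for every x̂ ∈ X the following are equivalent: (i) there exists a bounded linear operator B : X → Y such that x̂ is a minimizer over X of the functional x ↦ (1/2)‖Bx − y‖² + αR(x); (ii) there exists v in the subdifferential ∂R(x̂) with α⟨v, x̂⟩ ≤ ‖y‖²/4. -/
open Filter Topology
open scoped RealInnerProductSpace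

/-- The ADP characterization (equivalence): there exists a bounded linear
operator `B : X → Y` such that `xhat` minimizes `x ↦ (1/2)‖Bx − y‖² + αR(x)` iff there is a
subgradient `v ∈ ∂R(xhat)` with `α⟨v, xhat⟩ ≤ ‖y‖²/4`. -/
theorem adp_exists_operator_iff_subgradient
    {X Y : Type*} [NormedAddCommGroup X] [InnerProductSpace ℝ X] [CompleteSpace X]
    [NormedAddCommGroup Y] [InnerProductSpace ℝ Y] [CompleteSpace Y]
    (R : X → ℝ) (hR0 : ∀ x, 0 ≤ R x)
    (hRconv : ConvexOn ℝ Set.univ R)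
    (hRcoer : ∀ x : ℕ → X, Tendsto (fun k => ‖x k‖) atTop atTop →
      Tendsto (fun k => R (x k)) atTop atTop)
    (hRwlsc : ∀ (x : ℕ → X) (x₀ : X),
      (∀ w : X, Tendsto (fun k => ⟪w, x k⟫) atTop (𝓝 ⟪w, x₀⟫)) →
      R x₀ ≤ atTop.liminf (fun k => R (x k)))
    (y : Y) (hy : y ≠ 0) (α : ℝ) (hα : 0 < α) (xhat : X) :
    (∃ B : X →L[ℝ] Y, ∀ x : X,
        (1 / 2) * ‖B xhat - y‖ ^ 2 + α * R xhat ≤ (1 / 2) * ‖B x - y‖ ^ 2 + α * R x) ↔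
      (∃ v : X, (∀ z : X, R xhat + ⟪v, z - xhat⟫ ≤ R z) ∧
        α * ⟪v, xhat⟫ ≤ ‖y‖ ^ 2 / 4) := by
  constructor
  · rintro ⟨B, hmin⟩
    set a := B xhat - y with ha
    refine ⟨-α⁻¹ • (ContinuousLinearMap.adjoint B a), ?_, ?_⟩
    · intro z
      set b := B z - B xhat with hb
      have key : α * (R xhat - R z) ≤ ⟪a, b⟫ := by
        have step : ∀ t : ℝ, 0 < t → t ≤ 1 →
            α * (R xhat - R z) ≤ ⟪a, b⟫ + t * (‖b‖ ^ 2 / 2) := by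
          intro t ht ht1
          have hmin' := hmin (xhat + t • (z - xhat))
          have hB : B (xhat + t • (z - xhat)) - y = a + t • b := by
            rw [map_add, map_smul, map_sub, ha, hb]
            module
          have hconv : R (xhat + t • (z - xhat)) ≤ (1 - t) * R xhat + t * R z := by
            have h := hRconv.2 (Set.mem_univ xhat) (Set.mem_univ z)
              (by linarith : (0:ℝ) ≤ 1 - t) ht.le (by ring)
            have hx : (1 - t) • xhat + t • z = xhat + t • (z - xhat) := by module
            rwa [hx] at h
          have hnorm : ‖a + t • b‖ ^ 2 = ‖a‖ ^ 2 + 2 * (t * ⟪a, b⟫) + t ^ 2 * ‖b‖ ^ 2 := by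
            rw [@norm_add_sq_real, real_inner_smul_right, norm_smul]
            rw [mul_pow, Real.norm_eq_abs, sq_abs]
          rw [hB, hnorm] at hmin'
          have ht2 : t * (α * (R xhat - R z)) ≤ t * (⟪a, b⟫ + t * (‖b‖ ^ 2 / 2)) := by
            nlinarith [hmin', hconv, hα]
          exact le_of_mul_le_mul_left ht2 ht
        refine le_of_forall_pos_le_add ?_
        intro ε hε
        set C := ‖b‖ ^ 2 / 2 with hC
        have hC0 : 0 ≤ C := by positivity
        have htpos : 0 < min 1 (ε / (C + 1)) := by positivity
        have ht1 : min 1 (ε / (C + 1)) ≤ 1 := min_le_left _ _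
        have h2 := step _ htpos ht1
        have h3 : min 1 (ε / (C + 1)) ≤ ε / (C + 1) := min_le_right _ _
        have h4 : min 1 (ε / (C + 1)) * (C + 1) ≤ ε := by
          rw [← le_div_iff₀ (by linarith : (0:ℝ) < C + 1)]
          exact h3
        nlinarith [h2, h4, htpos]
      have hip : ⟪-α⁻¹ • (ContinuousLinearMap.adjoint B a), z - xhat⟫
          = -(α⁻¹ * ⟪a, b⟫) := by
        rw [real_inner_smul_left, ContinuousLinearMap.adjoint_inner_left, map_sub]
        ring
      rw [hip]
      have h5 : α * (R xhat - R z) * α⁻¹ ≤ ⟪a, b⟫ * α⁻¹ :=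
        mul_le_mul_of_nonneg_right key (inv_nonneg.mpr hα.le)
      rw [mul_comm α (R xhat - R z), mul_assoc, mul_inv_cancel₀ hα.ne', mul_one] at h5
      linarith
    · have hv : α * ⟪-α⁻¹ • (ContinuousLinearMap.adjoint B a), xhat⟫ = -⟪a, B xhat⟫ := by
        rw [real_inner_smul_left, ContinuousLinearMap.adjoint_inner_left]
        field_simp
      rw [hv]
      have h1 : ⟪a, B xhat⟫ = ‖B xhat‖ ^ 2 - ⟪y, B xhat⟫ := by
        rw [ha, inner_sub_left, real_inner_self_eq_norm_sq]
      rw [h1]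
      nlinarith [real_inner_le_norm y (B xhat), sq_nonneg (‖B xhat‖ - ‖y‖ / 2),
        norm_nonneg y, norm_nonneg (B xhat)]
  · rintro ⟨v, hv, hvx⟩
    set c := ‖y‖ ^ 2 with hc
    have hc0 : 0 < c := by
      have : 0 < ‖y‖ := norm_pos_iff.mpr hy
      positivity
    set t0 := ⟪v, xhat⟫ with ht0
    have hD : 0 ≤ c ^ 2 - 4 * c * (α * t0) := by nlinarith [hvx, hc0]
    set s := Real.sqrt (c ^ 2 - 4 * c * (α * t0)) with hs
    have hs0 : 0 ≤ s := Real.sqrt_nonneg _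
    have hs2 : s ^ 2 = c ^ 2 - 4 * c * (α * t0) := Real.sq_sqrt hD
    have hcs : 0 < c + s := by linarith
    set β := 2 * α / (c + s) with hβ
    have key : c * t0 * β ^ 2 - c * β + α = 0 := by
      rw [hβ]
      field_simp
      linear_combination α * hs2
    refine ⟨β • ((innerSL ℝ v).smulRight y), ?_⟩
    intro x
    have hBx : ∀ u : X, ‖(β • ((innerSL ℝ v).smulRight y)) u - y‖ ^ 2
        = c * (β * ⟪v, u⟫ - 1) ^ 2 := by
      intro u
      have he : (β • ((innerSL ℝ v).smulRight y)) u - y = (β * ⟪v, u⟫ - 1) • y := by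
        rw [ContinuousLinearMap.smul_apply, ContinuousLinearMap.smulRight_apply,
          innerSL_apply_apply, smul_smul, sub_smul, one_smul]
      rw [he, norm_smul, mul_pow, Real.norm_eq_abs, sq_abs, hc]
      ring
    rw [hBx x, hBx xhat]
    have hsub := hv x
    rw [inner_sub_right] at hsub
    have key2 : (⟪v, x⟫ - t0) * (c * t0 * β ^ 2 - c * β + α) = 0 := by rw [key]; ring
    nlinarith [key2, hsub, hα, mul_nonneg hc0.le (sq_nonneg (β * (⟪v, x⟫ - t0))),
      mul_le_mul_of_nonneg_left hsub hα.le]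
end

section
/- Let X and Y be real Hilbert spaces, let R : X → ℝ be nonnegative, convex, coercive and weakly sequentially lower semicontinuous, and let x̂ ∈ X, y ∈ Y with y ≠ 0, and α > 0. If there exists v ∈ ∂R(x̂) such that α⟨v, x̂⟩ ≤ ‖y‖²/4, then there exists a bounded linear operator B : X → Y such that x̂ is a minimizer over X of the functional x ↦ (1/2)‖Bx − y‖² + αR(x). -/
open Filter Topology
open scoped RealInnerProductSpace

/-- If there is a subgradient `v ∈ ∂R(xhat)` with `α⟨v, xhat⟩ ≤ ‖y‖²/4`, then
there exists a bounded linear operator `B : X → Y` such that `xhat` minimizes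
`x ↦ (1/2)‖Bx − y‖² + αR(x)`. -/
theorem adp_exists_operator_of_subgradient
    {X Y : Type*} [NormedAddCommGroup X] [InnerProductSpace ℝ X] [CompleteSpace X]
    [NormedAddCommGroup Y] [InnerProductSpace ℝ Y] [CompleteSpace Y]
    (R : X → ℝ) (hR0 : ∀ x, 0 ≤ R x)
    (hRconv : ConvexOn ℝ Set.univ R)
    (hRcoer : ∀ x : ℕ → X, Tendsto (fun k => ‖x k‖) atTop atTop →
      Tendsto (fun k => R (x k)) atTop atTop)
    (hRwlsc : ∀ (x : ℕ → X) (x₀ : X),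
      (∀ w : X, Tendsto (fun k => ⟪w, x k⟫) atTop (𝓝 ⟪w, x₀⟫)) →
      R x₀ ≤ atTop.liminf (fun k => R (x k)))
    (xhat : X) (y : Y) (hy : y ≠ 0) (α : ℝ) (hα : 0 < α)
    (v : X) (hv : ∀ z : X, R xhat + ⟪v, z - xhat⟫ ≤ R z)
    (hvineq : α * ⟪v, xhat⟫ ≤ ‖y‖ ^ 2 / 4) :
    ∃ B : X →L[ℝ] Y, ∀ x : X,
      (1 / 2) * ‖B xhat - y‖ ^ 2 + α * R xhat ≤ (1 / 2) * ‖B x - y‖ ^ 2 + α * R x := by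
  set c : ℝ := ‖y‖ with hc_def
  have hc : 0 < c := norm_pos_iff.mpr hy
  set s : ℝ := ⟪v, xhat⟫ with hs_def
  have hD : 0 ≤ c ^ 2 - 4 * α * s := by nlinarith
  set d : ℝ := Real.sqrt (c ^ 2 - 4 * α * s) with hd_def
  have hd0 : 0 ≤ d := Real.sqrt_nonneg _
  have hd2 : d ^ 2 = c ^ 2 - 4 * α * s := Real.sq_sqrt hD
  have hcd : c + d ≠ 0 := by positivity
  set t : ℝ := 2 * α / (c + d) with ht_def
  have key : t * (t * s - c) = -α := by
    rw [ht_def]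
    field_simp
    nlinarith [hd2]
  set u : Y := ‖y‖⁻¹ • y with hu_def
  have hu : ‖u‖ = 1 := by
    rw [hu_def, norm_smul, norm_inv, norm_norm]
    field_simp
  have hyu : c • u = y := by
    rw [hu_def, hc_def, smul_inv_smul₀ (norm_ne_zero_iff.mpr hy)]
  refine ⟨(innerSL ℝ v).smulRight (t • u), ?_⟩
  have hBx : ∀ x : X, ((innerSL ℝ v).smulRight (t • u)) x = (t * ⟪v, x⟫) • u := by
    intro x
    simp [ContinuousLinearMap.smulRight_apply, smul_smul, mul_comm]
  have hnorm : ∀ x : X, ‖((innerSL ℝ v).smulRight (t • u)) x - y‖ ^ 2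
      = (t * ⟪v, x⟫ - c) ^ 2 := by
    intro x
    rw [hBx, ← hyu, ← sub_smul, norm_smul, Real.norm_eq_abs, hu, mul_one, sq_abs]
  intro x
  rw [hnorm, hnorm]
  have h1 := hv x
  rw [inner_sub_right] at h1
  have h2 : α * (R xhat + (⟪v, x⟫ - s)) ≤ α * R x :=
    mul_le_mul_of_nonneg_left h1 hα.le
  nlinarith [key, sq_nonneg (t * (⟪v, x⟫ - s)), h2]
end

section
/- Let X and Y be real Hilbert spaces, let R : X → ℝ be nonnegative, convex, coercive and weakly sequentially lower semicontinuous, and let x̂ ∈ X, y ∈ Y, and α > 0. If every v ∈ ∂R(x̂) satisfies α⟨v, x̂⟩ > ‖y‖²/4, then there is no bounded linear operator B : X → Y such that x̂ is a minimizer over X of the functional x ↦ (1/2)‖Bx − y‖² + αR(x). -/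
open Filter Topology
open scoped RealInnerProductSpace

/-- If every subgradient `v ∈ ∂R(xhat)` satisfies `α⟨v, xhat⟩ > ‖y‖²/4`, then
there is no bounded linear operator `B : X → Y` such that `xhat` minimizes
`x ↦ (1/2)‖Bx − y‖² + αR(x)`. -/
theorem adp_no_operator_of_subgradient
    {X Y : Type*} [NormedAddCommGroup X] [InnerProductSpace ℝ X] [CompleteSpace X]
    [NormedAddCommGroup Y] [InnerProductSpace ℝ Y] [CompleteSpace Y]
    (R : X → ℝ) (hR0 : ∀ x, 0 ≤ R x)
    (hRconv : ConvexOn ℝ Set.univ R)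
    (hRcoer : ∀ x : ℕ → X, Tendsto (fun k => ‖x k‖) atTop atTop →
      Tendsto (fun k => R (x k)) atTop atTop)
    (hRwlsc : ∀ (x : ℕ → X) (x₀ : X),
      (∀ w : X, Tendsto (fun k => ⟪w, x k⟫) atTop (𝓝 ⟪w, x₀⟫)) →
      R x₀ ≤ atTop.liminf (fun k => R (x k)))
    (xhat : X) (y : Y) (α : ℝ) (hα : 0 < α)
    (hv : ∀ v : X, (∀ z : X, R xhat + ⟪v, z - xhat⟫ ≤ R z) →
      ‖y‖ ^ 2 / 4 < α * ⟪v, xhat⟫) :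
    ¬ ∃ B : X →L[ℝ] Y, ∀ x : X,
      (1 / 2) * ‖B xhat - y‖ ^ 2 + α * R xhat ≤ (1 / 2) * ‖B x - y‖ ^ 2 + α * R x := by
  rintro ⟨B, hB⟩
  set v : X := (1 / α) • ((ContinuousLinearMap.adjoint B) (y - B xhat)) with hvdef
  have hvin : ∀ w : X, ⟪v, w⟫ = (1 / α) * ⟪y - B xhat, B w⟫ := by
    intro w
    rw [hvdef, real_inner_smul_left, ContinuousLinearMap.adjoint_inner_left]
  have key : ∀ z : X, R xhat + ⟪v, z - xhat⟫ ≤ R z := by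
    intro z
    set c : ℝ := ⟪B xhat - y, B (z - xhat)⟫ with hc
    set d : ℝ := ‖B (z - xhat)‖ ^ 2 with hdd
    have hd : (0:ℝ) ≤ d := by positivity
    have main : ∀ t : ℝ, 0 < t → t ≤ 1 →
        α * (R xhat - R z) ≤ c + t / 2 * d := by
      intro t ht ht1
      have hx := hB ((1 - t) • xhat + t • z)
      have hconv : R ((1 - t) • xhat + t • z) ≤ (1 - t) * R xhat + t * R z := by
        simpa [smul_eq_mul] using hRconv.2 (Set.mem_univ xhat) (Set.mem_univ z)
          (show (0:ℝ) ≤ 1 - t by linarith) ht.le (by ring)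
      have hBt : B ((1 - t) • xhat + t • z) - y = (B xhat - y) + t • (B (z - xhat)) := by
        simp only [map_add, map_smul, map_sub]
        module
      have hnorm : ‖B ((1 - t) • xhat + t • z) - y‖ ^ 2
          = ‖B xhat - y‖ ^ 2 + 2 * (t * c) + t ^ 2 * d := by
        rw [hBt, norm_add_sq_real, real_inner_smul_right, norm_smul, mul_pow,
          Real.norm_eq_abs, sq_abs]
      rw [hnorm] at hx
      nlinarith [mul_pos ht hα, hx, mul_le_mul_of_nonneg_left hconv hα.le,
        mul_nonneg ht.le hd]
    have hle : α * (R xhat - R z) ≤ c := by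
      refine le_of_forall_pos_le_add ?_
      intro ε hε
      have ht0 : 0 < min 1 (ε / (d + 1)) := by positivity
      have := main (min 1 (ε / (d + 1))) ht0 (min_le_left _ _)
      have h2 : min 1 (ε / (d + 1)) ≤ ε / (d + 1) := min_le_right _ _
      have h3 : min 1 (ε / (d + 1)) / 2 * d ≤ ε := by
        have heq : ε / (d + 1) * (d + 1) = ε := by field_simp
        have hnn : (0:ℝ) ≤ ε / (d + 1) := by positivity
        nlinarith [mul_le_mul_of_nonneg_right h2 hd,
          mul_le_mul_of_nonneg_left (show d ≤ d + 1 by linarith) hnn,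
          mul_nonneg ht0.le hd]
      linarith
    have : ⟪v, z - xhat⟫ = (1 / α) * (-c) := by
      rw [hvin, hc]
      rw [show y - B xhat = -(B xhat - y) by abel, inner_neg_left]
    rw [this]
    rw [div_mul_eq_mul_div, one_mul, ← sub_nonneg]
    have : R z - (R xhat + -c / α) = (α * R z - α * R xhat + c) / α := by
      field_simp; ring
    rw [this]
    apply div_nonneg _ hα.le
    linarith
  have hfinal := hv v key
  have hαv : α * ⟪v, xhat⟫ = ⟪y - B xhat, B xhat⟫ := by
    rw [hvin]; field_simp
  rw [hαv] at hfinal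
  have hexp : ⟪y - B xhat, B xhat⟫ = ⟪y, B xhat⟫ - ‖B xhat‖ ^ 2 := by
    rw [inner_sub_left, real_inner_self_eq_norm_sq]
  have hcs := real_inner_le_norm y (B xhat)
  rw [hexp] at hfinal
  nlinarith [sq_nonneg (‖y‖ - 2 * ‖B xhat‖), norm_nonneg y, norm_nonneg (B xhat)]
end

section
/- Let X and Y be real Hilbert spaces, let y ∈ Y with y ≠ 0, let α > 0, and let x̂ ∈ X. Then there exists a bounded linear operator B : X → Y such that x̂ is a minimizer over X of the functional x ↦ (1/2)‖Bx − y‖² + (α/2)‖x‖² if and only if ‖x̂‖² ≤ ‖y‖²/(4α). -/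
open Filter Topology
open scoped RealInnerProductSpace

lemma aux_quad_zero (a b : ℝ) (ha : 0 ≤ a) (h : ∀ e : ℝ, 0 ≤ a * e ^ 2 + b * e) :
    b = 0 := by
  rcases eq_or_lt_of_le ha with h0 | h0
  · have h1 := h 1
    have h2 := h (-1)
    nlinarith
  · have hkey := h (-(b / (2 * a)))
    have heq : a * (-(b / (2 * a))) ^ 2 + b * (-(b / (2 * a))) = -(b ^ 2 / (4 * a)) := by
      field_simp
      ring
    rw [heq] at hkey
    have h4a : (0:ℝ) < 4 * a := by linarith
    have hnn : 0 ≤ b ^ 2 / (4 * a) := div_nonneg (sq_nonneg b) h4a.le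
    have hz : b ^ 2 / (4 * a) = 0 := le_antisymm (by linarith) hnn
    field_simp at hz
    simpa using hz

/-- For the standard Tikhonov penalty `R(x) = (1/2)‖x‖²`, there exists a bounded
linear operator `B : X → Y` such that `xhat` minimizes `x ↦ (1/2)‖Bx − y‖² + (α/2)‖x‖²`
if and only if `‖xhat‖² ≤ ‖y‖²/(4α)`. -/
theorem adp_exists_operator_iff_norm_bound
    {X Y : Type*} [NormedAddCommGroup X] [InnerProductSpace ℝ X] [CompleteSpace X]
    [NormedAddCommGroup Y] [InnerProductSpace ℝ Y] [CompleteSpace Y]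
    (y : Y) (hy : y ≠ 0) (α : ℝ) (hα : 0 < α) (xhat : X) :
    (∃ B : X →L[ℝ] Y, ∀ x : X,
        (1 / 2) * ‖B xhat - y‖ ^ 2 + (α / 2) * ‖xhat‖ ^ 2 ≤
          (1 / 2) * ‖B x - y‖ ^ 2 + (α / 2) * ‖x‖ ^ 2) ↔
      ‖xhat‖ ^ 2 ≤ ‖y‖ ^ 2 / (4 * α) := by
  set s : ℝ := ‖xhat‖ ^ 2 with hs
  constructor
  · rintro ⟨B, hB⟩
    -- first-order condition along direction xhat
    set u : Y := B xhat with hu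
    have key : ∀ e : ℝ,
        0 ≤ ((1/2) * ‖u‖ ^ 2 + (α/2) * s) * e ^ 2 + (⟪u - y, u⟫ + α * s) * e := by
      intro e
      have h1 := hB ((1 + e) • xhat)
      have hBx : B ((1 + e) • xhat) - y = (u - y) + e • u := by
        rw [map_smul]
        module
      have hn1 : ‖B ((1 + e) • xhat) - y‖ ^ 2
          = ‖u - y‖ ^ 2 + 2 * (e * ⟪u - y, u⟫) + e ^ 2 * ‖u‖ ^ 2 := by
        rw [hBx, norm_add_sq_real, real_inner_smul_right, norm_smul, mul_pow,
          Real.norm_eq_abs, sq_abs]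
      have hn2 : ‖(1 + e) • xhat‖ ^ 2 = (1 + e) ^ 2 * s := by
        rw [norm_smul, mul_pow, Real.norm_eq_abs, sq_abs]
      rw [hn1, hn2] at h1
      nlinarith [h1]
    have hb0 : ⟪u - y, u⟫ + α * s = 0 := by
      apply aux_quad_zero _ _ _ key
      positivity
    have hineq : ‖u‖ ^ 2 + α * s ≤ ‖y‖ * ‖u‖ := by
      have h2 : ⟪u - y, u⟫ = ‖u‖ ^ 2 - ⟪y, u⟫ := by
        rw [inner_sub_left, real_inner_self_eq_norm_sq]
      have h3 := real_inner_le_norm y u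
      nlinarith
    rw [le_div_iff₀ (by positivity)]
    nlinarith [sq_nonneg (2 * ‖u‖ - ‖y‖), norm_nonneg u, norm_nonneg y, hα]
  · intro hbound
    by_cases hx0 : xhat = 0
    · refine ⟨0, fun x => ?_⟩
      simp only [hx0, map_zero, ContinuousLinearMap.zero_apply, zero_sub, norm_neg,
        norm_zero]
      have hs0 : s = 0 := by simp [hs, hx0]
      nlinarith [sq_nonneg ‖x‖]
    · -- construct rank-one operator
      have hs0 : 0 < s := by
        have := norm_pos_iff.mpr hx0
        positivity
      have hy0 : 0 < ‖y‖ := norm_pos_iff.mpr hy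
      set d : ℝ := Real.sqrt (‖y‖ ^ 2 - 4 * α * s) with hd
      have hdisc : 0 ≤ ‖y‖ ^ 2 - 4 * α * s := by
        rw [le_div_iff₀ (by positivity)] at hbound
        nlinarith
      have hd2 : d ^ 2 = ‖y‖ ^ 2 - 4 * α * s := Real.sq_sqrt hdisc
      set t : ℝ := (‖y‖ - d) / (2 * s * ‖y‖) with ht
      have hq : s * ‖y‖ ^ 2 * t ^ 2 - ‖y‖ ^ 2 * t + α = 0 := by
        rw [ht]
        field_simp
        linear_combination hd2
      refine ⟨t • ((innerSL ℝ xhat).smulRight y), fun x => ?_⟩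
      have hBx : ∀ z : X, (t • ((innerSL ℝ xhat).smulRight y)) z - y
          = (t * ⟪xhat, z⟫ - 1) • y := by
        intro z
        simp [ContinuousLinearMap.smulRight_apply, smul_smul]
        module
      have hnorm : ∀ z : X, ‖(t • ((innerSL ℝ xhat).smulRight y)) z - y‖ ^ 2
          = (t * ⟪xhat, z⟫ - 1) ^ 2 * ‖y‖ ^ 2 := by
        intro z
        rw [hBx, norm_smul, mul_pow, Real.norm_eq_abs, sq_abs]
      rw [hnorm, hnorm]
      have hself : ⟪xhat, xhat⟫ = s := real_inner_self_eq_norm_sq xhat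
      have hxexp : ‖x‖ ^ 2 = s + 2 * (⟪xhat, x⟫ - s) + ‖x - xhat‖ ^ 2 := by
        have : x = xhat + (x - xhat) := by abel
        nth_rewrite 1 [this]
        rw [norm_add_sq_real, inner_sub_right, hself]
      rw [hself, hxexp]
      set p : ℝ := ⟪xhat, x⟫ with hp
      have hq' : (p - s) * (s * ‖y‖ ^ 2 * t ^ 2 - ‖y‖ ^ 2 * t + α) = 0 := by
        rw [hq]; ring
      nlinarith [mul_nonneg (sq_nonneg ‖y‖) (sq_nonneg (t * (p - s))),
        mul_nonneg hα.le (sq_nonneg ‖x - xhat‖), hq']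
end

section
/- Let X and Y be real Hilbert spaces, let R : X → ℝ be nonnegative, strongly convex (with some modulus m > 0), coercive and weakly sequentially lower semicontinuous, let y ∈ Y and α > 0, and suppose that for every bounded linear operator B : X → Y the functional x ↦ (1/2)‖Bx − y‖² + αR(x) has a unique minimizer x(B) ∈ X. Then the map B ↦ x(B) is continuous from the space of bounded linear operators X → Y with the operator norm to X with the norm topology; that is, if B_k → B in operator norm, then x(B_k) → x(B) in X. -/
open Filter Topology
open scoped RealInnerProductSpace

set_option maxHeartbeats 1600000 in
/-- If `R` is nonnegative, `m`-strongly convex, coercive and weakly sequentially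
lower semicontinuous, and for each bounded linear operator `B : X → Y` the functional
`x ↦ (1/2)‖Bx − y‖² + αR(x)` has the unique minimizer `xB B`, then `B ↦ xB B` is continuous
(in the operator norm / norm topologies): `B_k → B` implies `xB (B_k) → xB B`. -/
theorem adp_minimizer_continuous
    {X Y : Type*} [NormedAddCommGroup X] [InnerProductSpace ℝ X] [CompleteSpace X]
    [NormedAddCommGroup Y] [InnerProductSpace ℝ Y] [CompleteSpace Y]
    (R : X → ℝ) (hR0 : ∀ x, 0 ≤ R x)
    (m : ℝ) (hm : 0 < m)
    (hRsconv : ∀ (x z : X) (t : ℝ), 0 ≤ t → t ≤ 1 →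
      R (t • x + (1 - t) • z) ≤
        t * R x + (1 - t) * R z - (m / 2) * t * (1 - t) * ‖x - z‖ ^ 2)
    (hRcoer : ∀ x : ℕ → X, Tendsto (fun k => ‖x k‖) atTop atTop →
      Tendsto (fun k => R (x k)) atTop atTop)
    (hRwlsc : ∀ (x : ℕ → X) (x₀ : X),
      (∀ w : X, Tendsto (fun k => ⟪w, x k⟫) atTop (𝓝 ⟪w, x₀⟫)) →
      R x₀ ≤ atTop.liminf (fun k => R (x k)))
    (y : Y) (α : ℝ) (hα : 0 < α)
    (xB : (X →L[ℝ] Y) → X)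
    (hmin : ∀ B : X →L[ℝ] Y, ∀ x : X,
      (1 / 2) * ‖B (xB B) - y‖ ^ 2 + α * R (xB B) ≤ (1 / 2) * ‖B x - y‖ ^ 2 + α * R x)
    (huniq : ∀ (B : X →L[ℝ] Y) (x' : X),
      (∀ x : X, (1 / 2) * ‖B x' - y‖ ^ 2 + α * R x' ≤ (1 / 2) * ‖B x - y‖ ^ 2 + α * R x) →
      x' = xB B) :
    Continuous xB := by
  -- Step 1: sublevel sets of R are bounded
  have hsub : ∀ c : ℝ, ∃ C : ℝ, 0 ≤ C ∧ ∀ x : X, R x ≤ c → ‖x‖ ≤ C := by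
    intro c
    by_contra hcon
    push_neg at hcon
    choose x hx1 hx2 using fun k : ℕ => hcon k (Nat.cast_nonneg k)
    have hnorm : Tendsto (fun k => ‖x k‖) atTop atTop :=
      tendsto_atTop_mono (fun k => (hx2 k).le) tendsto_natCast_atTop_atTop
    obtain ⟨k, hk⟩ := ((hRcoer x hnorm).eventually_gt_atTop c).exists
    exact absurd (hx1 k) (not_le.mpr hk)
  -- Step 2: strong convexity inequality at the minimizer
  have hkey : ∀ (B : X →L[ℝ] Y) (x : X),
      α * m / 4 * ‖x - xB B‖ ^ 2 ≤
        ((1 / 2) * ‖B x - y‖ ^ 2 + α * R x)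
          - ((1 / 2) * ‖B (xB B) - y‖ ^ 2 + α * R (xB B)) := by
    intro B x
    have hRc := hRsconv x (xB B) (1/2) (by norm_num) (by norm_num)
    have hw : B ((1/2 : ℝ) • x + (1 - 1/2 : ℝ) • (xB B)) - y
        = (1/2 : ℝ) • (B x - y) + (1/2 : ℝ) • (B (xB B) - y) := by
      rw [map_add, map_smul, map_smul]
      have : ((1 : ℝ) - 1/2) = (1/2 : ℝ) := by norm_num
      rw [this]
      module
    have hnle : ‖B ((1/2 : ℝ) • x + (1 - 1/2 : ℝ) • (xB B)) - y‖
        ≤ (1/2) * ‖B x - y‖ + (1/2) * ‖B (xB B) - y‖ := by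
      rw [hw]
      refine (norm_add_le _ _).trans ?_
      rw [norm_smul, norm_smul]
      simp [Real.norm_eq_abs]
    have hsq := pow_le_pow_left₀ (norm_nonneg _) hnle 2
    have hmw := hmin B ((1/2 : ℝ) • x + (1 - 1/2 : ℝ) • (xB B))
    have hRc' := mul_le_mul_of_nonneg_left hRc hα.le
    nlinarith [norm_nonneg (B x - y), norm_nonneg (B (xB B) - y),
      norm_nonneg (x - xB B), sq_nonneg (‖B x - y‖ - ‖B (xB B) - y‖)]
  -- Step 3: difference of data-fit terms
  have hdiff : ∀ (B B' : X →L[ℝ] Y) (x : X),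
      (1/2) * ‖B' x - y‖ ^ 2 - (1/2) * ‖B x - y‖ ^ 2 ≤
        ‖B' - B‖ * (‖x‖ * ((1/2) * (‖B x - y‖ + ‖B' x - y‖))) := by
    intro B B' x
    have h1 : ‖(B' x - y) - (B x - y)‖ ≤ ‖B' - B‖ * ‖x‖ := by
      have e : (B' x - y) - (B x - y) = (B' - B) x := by
        rw [ContinuousLinearMap.sub_apply]; abel
      rw [e]; exact (B' - B).le_opNorm x
    have h2 : ‖B' x - y‖ - ‖B x - y‖ ≤ ‖(B' x - y) - (B x - y)‖ :=
      norm_sub_norm_le _ _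
    have h3 := mul_le_mul_of_nonneg_right (h2.trans h1)
      (by positivity : (0:ℝ) ≤ ‖B x - y‖ + ‖B' x - y‖)
    nlinarith [norm_nonneg (B x - y), norm_nonneg (B' x - y)]
  -- Step 4: continuity
  rw [continuous_iff_continuousAt]
  intro B
  rw [Metric.continuousAt_iff]
  intro ε hε
  obtain ⟨C, hC0, hC⟩ := hsub (((1/2) * ((‖B‖ + 1) * ‖xB B‖ + ‖y‖) ^ 2 + α * R (xB B)) / α)
  set N : ℝ := (‖B‖ + 1) * C + ‖y‖ with hN
  have hN0 : 0 ≤ N := by positivity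
  have hxsC : ‖xB B‖ ≤ C := by
    refine hC _ ?_
    rw [le_div_iff₀ hα]
    nlinarith [sq_nonneg ((‖B‖ + 1) * ‖xB B‖ + ‖y‖), hR0 (xB B)]
  -- uniform bound on minimizers for nearby operators
  have hbound : ∀ B' : X →L[ℝ] Y, ‖B' - B‖ ≤ 1 → ‖xB B'‖ ≤ C := by
    intro B' hB'
    have hB'n : ‖B'‖ ≤ ‖B‖ + 1 := by
      have := norm_sub_norm_le B' B
      linarith
    have h1 : ‖B' (xB B) - y‖ ≤ (‖B‖ + 1) * ‖xB B‖ + ‖y‖ := by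
      refine (norm_sub_le _ _).trans ?_
      have h2 := B'.le_opNorm (xB B)
      have h3 : ‖B'‖ * ‖xB B‖ ≤ (‖B‖ + 1) * ‖xB B‖ :=
        mul_le_mul_of_nonneg_right hB'n (norm_nonneg _)
      linarith
    have h2 := hmin B' (xB B)
    have h4 := pow_le_pow_left₀ (norm_nonneg (B' (xB B) - y)) h1 2
    refine hC _ ?_
    rw [le_div_iff₀ hα]
    nlinarith [sq_nonneg ‖B' (xB B') - y‖]
  -- norm bound for residuals
  have bnd : ∀ (u : X), ‖u‖ ≤ C → ∀ (Bop : X →L[ℝ] Y), ‖Bop‖ ≤ ‖B‖ + 1 →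
      ‖Bop u - y‖ ≤ N := by
    intro u hu Bop hB
    refine (norm_sub_le _ _).trans ?_
    have h2 := Bop.le_opNorm u
    have h3 : ‖Bop‖ * ‖u‖ ≤ (‖B‖ + 1) * C :=
      mul_le_mul hB hu (norm_nonneg _) (by positivity)
    rw [hN]; linarith
  have hCN1 : (0:ℝ) < C * N + 1 := by positivity
  refine ⟨min 1 (ε ^ 2 * α * m / (8 * (C * N + 1))),
    lt_min one_pos (by positivity), fun {B'} hB'd => ?_⟩
  rw [dist_eq_norm] at hB'd ⊢
  have hle1 : ‖B' - B‖ ≤ 1 := (lt_of_lt_of_le hB'd (min_le_left _ _)).le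
  have hS : ‖B' - B‖ < ε ^ 2 * α * m / (8 * (C * N + 1)) :=
    lt_of_lt_of_le hB'd (min_le_right _ _)
  have hB'n : ‖B'‖ ≤ ‖B‖ + 1 := by
    have := norm_sub_norm_le B' B
    linarith
  have hx'C : ‖xB B'‖ ≤ C := hbound B' hle1
  have na := bnd (xB B') hx'C B (by linarith [norm_nonneg B])
  have nb := bnd (xB B') hx'C B' hB'n
  have nc := bnd (xB B) hxsC B (by linarith [norm_nonneg B])
  have nd := bnd (xB B) hxsC B' hB'n
  have key1 := hkey B (xB B')
  have e1 := hdiff B' B (xB B')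
  have e2 := hdiff B B' (xB B)
  rw [norm_sub_rev B B'] at e1
  have hm2 := hmin B' (xB B)
  have t1 : ‖B' - B‖ * (‖xB B'‖ * ((1/2) * (‖B' (xB B') - y‖ + ‖B (xB B') - y‖)))
      ≤ ‖B' - B‖ * (C * N) := by
    refine mul_le_mul_of_nonneg_left ?_ (norm_nonneg _)
    have h12 : (1/2) * (‖B' (xB B') - y‖ + ‖B (xB B') - y‖) ≤ N := by linarith
    exact mul_le_mul hx'C h12 (by positivity) hC0
  have t2 : ‖B' - B‖ * (‖xB B‖ * ((1/2) * (‖B (xB B) - y‖ + ‖B' (xB B) - y‖)))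
      ≤ ‖B' - B‖ * (C * N) := by
    refine mul_le_mul_of_nonneg_left ?_ (norm_nonneg _)
    have h12 : (1/2) * (‖B (xB B) - y‖ + ‖B' (xB B) - y‖) ≤ N := by linarith
    exact mul_le_mul hxsC h12 (by positivity) hC0
  have big : α * m / 4 * ‖xB B' - xB B‖ ^ 2 ≤ 2 * (C * N) * ‖B' - B‖ := by
    linarith
  have dsq : ‖xB B' - xB B‖ ^ 2 < ε ^ 2 := by
    have h8 : 2 * (C * N) * ‖B' - B‖ ≤ 2 * (C * N + 1) * ‖B' - B‖ :=
      mul_le_mul_of_nonneg_right (by linarith) (norm_nonneg (B' - B))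
    have h9 : 2 * (C * N + 1) * ‖B' - B‖
        < 2 * (C * N + 1) * (ε ^ 2 * α * m / (8 * (C * N + 1))) :=
      mul_lt_mul_of_pos_left hS (by positivity)
    have h10 : 2 * (C * N + 1) * (ε ^ 2 * α * m / (8 * (C * N + 1)))
        = ε ^ 2 * α * m / 4 := by
      field_simp; ring
    have h11 : α * m / 4 * ‖xB B' - xB B‖ ^ 2 < ε ^ 2 * α * m / 4 := by
      calc α * m / 4 * ‖xB B' - xB B‖ ^ 2 ≤ 2 * (C * N) * ‖B' - B‖ := big
        _ ≤ 2 * (C * N + 1) * ‖B' - B‖ := h8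
        _ < _ := h9
        _ = ε ^ 2 * α * m / 4 := h10
    have hαm : 0 < α * m := mul_pos hα hm
    nlinarith
  by_contra hcon
  push_neg at hcon
  have := pow_le_pow_left₀ hε.le hcon 2
  linarith
end

section
/- Let X and Y be real Hilbert spaces, let A : X → Y be a bounded linear operator with adjoint A*, let y ∈ Y and α > 0, and let x_α ∈ X be the unique solution of (A*A + αI) x_α = A*y, i.e. the Tikhonov minimizer of x ↦ (1/2)‖Ax − y‖² + (α/2)‖x‖². Then α‖x_α‖² ≤ ‖y‖²/4. Moreover, if x̂ ∈ X minimizes (1/2)‖Ax − y‖² over the set {x ∈ X : α‖x‖² ≤ ‖y‖²/4}, then ‖x_α‖ ≤ ‖x̂‖. -/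
open Filter Topology
open scoped RealInnerProductSpace

/-- If `xα` is the Tikhonov solution, i.e. `(A*A + αI) xα = A*y`, then
`α‖xα‖² ≤ ‖y‖²/4`; moreover if `xhat` minimizes `(1/2)‖Ax − y‖²` over
`{x : α‖x‖² ≤ ‖y‖²/4}`, then `‖xα‖ ≤ ‖xhat‖`. -/
theorem tikhonov_feasible_and_norm_le
    {X Y : Type*} [NormedAddCommGroup X] [InnerProductSpace ℝ X] [CompleteSpace X]
    [NormedAddCommGroup Y] [InnerProductSpace ℝ Y] [CompleteSpace Y]
    (A : X →L[ℝ] Y) (y : Y) (α : ℝ) (hα : 0 < α)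
    (xα : X)
    (hxα : ContinuousLinearMap.adjoint A (A xα) + α • xα = ContinuousLinearMap.adjoint A y) :
    α * ‖xα‖ ^ 2 ≤ ‖y‖ ^ 2 / 4 ∧
      ∀ xhat : X,
        α * ‖xhat‖ ^ 2 ≤ ‖y‖ ^ 2 / 4 →
        (∀ x : X, α * ‖x‖ ^ 2 ≤ ‖y‖ ^ 2 / 4 →
          (1 / 2) * ‖A xhat - y‖ ^ 2 ≤ (1 / 2) * ‖A x - y‖ ^ 2) →
        ‖xα‖ ≤ ‖xhat‖ := by
  -- inner product of the normal equation with xα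
  have key : ‖A xα‖ ^ 2 + α * ‖xα‖ ^ 2 = ⟪y, A xα⟫ := by
    have h := congrArg (fun z => ⟪z, xα⟫) hxα
    simp only [inner_add_left, real_inner_smul_left,
      ContinuousLinearMap.adjoint_inner_left] at h
    rw [real_inner_self_eq_norm_sq, real_inner_self_eq_norm_sq] at h
    linarith [h]
  have hCS : ⟪y, A xα⟫ ≤ ‖y‖ * ‖A xα‖ := real_inner_le_norm y (A xα)
  have hfeas : α * ‖xα‖ ^ 2 ≤ ‖y‖ ^ 2 / 4 := by
    nlinarith [sq_nonneg (‖A xα‖ - ‖y‖ / 2)]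
  refine ⟨hfeas, fun xhat hfeas' hmin => ?_⟩
  -- Tikhonov minimality: for any x, J(xα) ≤ J(x)
  have tikh : ∀ x : X,
      (1 / 2) * ‖A xα - y‖ ^ 2 + (α / 2) * ‖xα‖ ^ 2 ≤
      (1 / 2) * ‖A x - y‖ ^ 2 + (α / 2) * ‖x‖ ^ 2 := by
    intro x
    have hgrad : ⟪ContinuousLinearMap.adjoint A (A xα) + α • xα
        - ContinuousLinearMap.adjoint A y, x - xα⟫ = 0 := by
      rw [hxα]; simp
    have hexp : ⟪A xα - y, A (x - xα)⟫ + α * ⟪xα, x - xα⟫ = 0 := by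
      simp only [inner_sub_left, inner_add_left, real_inner_smul_left,
        ContinuousLinearMap.adjoint_inner_left] at hgrad
      rw [inner_sub_left]
      linarith [hgrad]
    have e1 : ‖A x - y‖ ^ 2 = ‖A xα - y‖ ^ 2 + 2 * ⟪A xα - y, A (x - xα)⟫
        + ‖A (x - xα)‖ ^ 2 := by
      have h : A x - y = (A xα - y) + A (x - xα) := by
        rw [map_sub]; abel
      rw [h, norm_add_sq_real]
    have e2 : ‖x‖ ^ 2 = ‖xα‖ ^ 2 + 2 * ⟪xα, x - xα⟫ + ‖x - xα‖ ^ 2 := by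
      have h : x = xα + (x - xα) := by abel
      nth_rewrite 1 [h]
      rw [norm_add_sq_real]
    nlinarith [sq_nonneg ‖A (x - xα)‖, sq_nonneg ‖x - xα‖, hα.le]
  have h1 := tikh xhat
  have h2 := hmin xα hfeas
  have hsq : ‖xα‖ ^ 2 ≤ ‖xhat‖ ^ 2 := by nlinarith [h1, h2, hα]
  nlinarith [hsq, norm_nonneg xα, norm_nonneg xhat]
end

section
/- Let X and Y be real Hilbert spaces, let A : X → Y be a bounded linear operator with adjoint A*, and let y ∈ Y with A*y ≠ 0. For α > 0 let x_α = (A*A + αI)^{-1} A*y denote the Tikhonov solution with parameter α. Then the map α ↦ ‖x_α‖ is strictly decreasing on (0, ∞): for 0 < α < α' one has ‖x_{α'}‖ < ‖x_α‖. -/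
open Filter Topology
open scoped RealInnerProductSpace

/-- Strict monotonicity of the norm of the Tikhonov solution in the
regularization parameter: if `A*y ≠ 0`, `0 < α < α'` and `xα`, `xα'` satisfy the
respective normal equations `(A*A + αI) xα = A*y` and `(A*A + α'I) xα' = A*y`, then
`‖xα'‖ < ‖xα‖`. -/
theorem tikhonov_norm_strict_anti
    {X Y : Type*} [NormedAddCommGroup X] [InnerProductSpace ℝ X] [CompleteSpace X]
    [NormedAddCommGroup Y] [InnerProductSpace ℝ Y] [CompleteSpace Y]
    (A : X →L[ℝ] Y) (y : Y) (hAy : ContinuousLinearMap.adjoint A y ≠ 0)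
    (α α' : ℝ) (hα : 0 < α) (hαα' : α < α')
    (xα xα' : X)
    (hxα : ContinuousLinearMap.adjoint A (A xα) + α • xα = ContinuousLinearMap.adjoint A y)
    (hxα' : ContinuousLinearMap.adjoint A (A xα') + α' • xα' =
      ContinuousLinearMap.adjoint A y) :
    ‖xα'‖ < ‖xα‖ := by
  set d := xα - xα' with hd
  have hdne : d ≠ 0 := by
    intro h
    have hx : xα = xα' := by rwa [hd, sub_eq_zero] at h
    rw [hx] at hxα
    have h2 : α • xα' = α' • xα' := add_left_cancel (hxα.trans hxα'.symm)
    have h3 : (α - α') • xα' = 0 := by rw [sub_smul, h2, sub_self]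
    have hne : α - α' ≠ 0 := by linarith
    have hx0 : xα' = 0 := (smul_eq_zero.mp h3).resolve_left hne
    rw [hx0] at hxα'
    simp at hxα'
    exact hAy hxα'.symm
  have key : (α' - α) * ⟪xα', d⟫ = ⟪A d, A d⟫ + α * ⟪d, d⟫ := by
    have e1 : ⟪A xα, A d⟫ + α * ⟪xα, d⟫ = ⟪ContinuousLinearMap.adjoint A y, d⟫ := by
      rw [← hxα]
      simp [inner_add_left, real_inner_smul_left, ContinuousLinearMap.adjoint_inner_left]
    have e2 : ⟪A xα', A d⟫ + α' * ⟪xα', d⟫ = ⟪ContinuousLinearMap.adjoint A y, d⟫ := by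
      rw [← hxα']
      simp [inner_add_left, real_inner_smul_left, ContinuousLinearMap.adjoint_inner_left]
    have e3 : ⟪A d, A d⟫ = ⟪A xα, A d⟫ - ⟪A xα', A d⟫ := by
      rw [hd, map_sub, inner_sub_left]
    have e4 : ⟪xα, d⟫ = ⟪d, d⟫ + ⟪xα', d⟫ := by
      have hx : xα = d + xα' := by rw [hd]; abel
      rw [hx, inner_add_left]
    linear_combination e2 - e1 - e3 + α * e4
  have hc : 0 < ⟪xα', d⟫ := by
    have h1 : 0 ≤ ⟪A d, A d⟫ := real_inner_self_nonneg
    have h2 : 0 < ⟪d, d⟫ := by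
      rw [real_inner_self_eq_norm_sq]
      exact pow_pos (norm_pos_iff.mpr hdne) 2
    nlinarith
  have hsq : ‖xα'‖ ^ 2 < ‖xα‖ ^ 2 := by
    have hx : xα = xα' + d := by rw [hd]; abel
    have hnorm := norm_add_sq_real xα' d
    have hd2 : 0 ≤ ‖d‖ ^ 2 := sq_nonneg _
    rw [hx, hnorm]
    nlinarith
  exact lt_of_pow_lt_pow_left₀ 2 (norm_nonneg _) hsq
end

section
/- Let X and Y be real Hilbert spaces, let A : X → Y be a bounded linear operator with adjoint A*, let y ∈ Y with A*y ≠ 0, and let α > 0 and α̃ ≥ 0. Suppose x̂ ∈ X minimizes (1/2)‖Ax − y‖² over the set {x ∈ X : α‖x‖² ≤ ‖y‖²/4} and satisfies (A*A + α̃I) x̂ = A*y (i.e. x̂ is also the Tikhonov solution with parameter α̃). Then α̃ ≤ α. -/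
open Filter Topology
open scoped RealInnerProductSpace

set_option maxHeartbeats 1000000

/-- If `A*y ≠ 0`, `xhat` minimizes `(1/2)‖Ax − y‖²` over the Ivanov feasible
set `{x : α‖x‖² ≤ ‖y‖²/4}` and also satisfies the Tikhonov normal equation
`(A*A + α̃I) xhat = A*y` with `α̃ ≥ 0`, then `α̃ ≤ α`. -/
theorem adp_tikhonov_parameter_le
    {X Y : Type*} [NormedAddCommGroup X] [InnerProductSpace ℝ X] [CompleteSpace X]
    [NormedAddCommGroup Y] [InnerProductSpace ℝ Y] [CompleteSpace Y]
    (A : X →L[ℝ] Y) (y : Y) (hAy : ContinuousLinearMap.adjoint A y ≠ 0)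
    (α αt : ℝ) (hα : 0 < α) (hαt : 0 ≤ αt)
    (xhat : X)
    (hfeas : α * ‖xhat‖ ^ 2 ≤ ‖y‖ ^ 2 / 4)
    (hmin : ∀ x : X, α * ‖x‖ ^ 2 ≤ ‖y‖ ^ 2 / 4 →
      (1 / 2) * ‖A xhat - y‖ ^ 2 ≤ (1 / 2) * ‖A x - y‖ ^ 2)
    (htik : ContinuousLinearMap.adjoint A (A xhat) + αt • xhat =
      ContinuousLinearMap.adjoint A y) :
    αt ≤ α := by
  have hx0 : xhat ≠ 0 := by
    rintro rfl
    simp at htik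
    exact hAy htik.symm
  have hN : (0:ℝ) < ‖xhat‖ := norm_pos_iff.mpr hx0
  have hN2 : (0:ℝ) < ‖xhat‖ ^ 2 := pow_pos hN 2
  have key : ‖A xhat‖ ^ 2 + αt * ‖xhat‖ ^ 2 = ⟪y, A xhat⟫ := by
    have h := congrArg (fun z => ⟪z, xhat⟫) htik
    simp only [inner_add_left, real_inner_smul_left,
      ContinuousLinearMap.adjoint_inner_left] at h
    rw [real_inner_self_eq_norm_sq, real_inner_self_eq_norm_sq] at h
    linarith [h]
  have hcs : ⟪y, A xhat⟫ ≤ ‖y‖ * ‖A xhat‖ := real_inner_le_norm _ _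
  have hg4 : αt * ‖xhat‖ ^ 2 ≤ ‖y‖ ^ 2 / 4 := by
    nlinarith [sq_nonneg (‖A xhat‖ - ‖y‖ / 2)]
  by_cases hact : α * ‖xhat‖ ^ 2 = ‖y‖ ^ 2 / 4
  · nlinarith
  · have hlt : α * ‖xhat‖ ^ 2 < ‖y‖ ^ 2 / 4 := lt_of_le_of_ne hfeas hact
    rcases hαt.lt_or_eq with hpos | hz
    swap
    · linarith
    exfalso
    set g : ℝ := αt * ‖xhat‖ ^ 2 with hgdef
    have hgpos : 0 < g := mul_pos hpos hN2
    set M : ℝ := ‖A xhat‖ with hMdef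
    set δ : ℝ := ‖y‖ ^ 2 / 4 - α * ‖xhat‖ ^ 2 with hδdef
    have hδpos : 0 < δ := by simp only [hδdef]; linarith
    set t : ℝ := min 1 (min (δ / (3 * α * ‖xhat‖ ^ 2 + 1)) (g / (M ^ 2 + 1))) with htdef
    have hden1 : (0:ℝ) < 3 * α * ‖xhat‖ ^ 2 + 1 := by positivity
    have hden2 : (0:ℝ) < M ^ 2 + 1 := by positivity
    have ht0 : 0 < t := by
      apply lt_min one_pos
      exact lt_min (div_pos hδpos hden1) (div_pos hgpos hden2)
    have ht1 : t ≤ 1 := min_le_left _ _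
    have htδ : t ≤ δ / (3 * α * ‖xhat‖ ^ 2 + 1) :=
      le_trans (min_le_right _ _) (min_le_left _ _)
    have htg : t ≤ g / (M ^ 2 + 1) :=
      le_trans (min_le_right _ _) (min_le_right _ _)
    have htδ' : t * (3 * α * ‖xhat‖ ^ 2 + 1) ≤ δ := (le_div_iff₀ hden1).mp htδ
    have htg' : t * (M ^ 2 + 1) ≤ g := (le_div_iff₀ hden2).mp htg
    have ht2 : t ^ 2 ≤ t := by nlinarith
    clear_value t δ g M
    -- feasibility of (1+t) • xhat
    have hfeas' : α * ‖(1 + t) • xhat‖ ^ 2 ≤ ‖y‖ ^ 2 / 4 := by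
      rw [norm_smul, Real.norm_eq_abs, abs_of_pos (by linarith : (0:ℝ) < 1 + t),
        mul_pow]
      have hδeq : δ = ‖y‖ ^ 2 / 4 - α * ‖xhat‖ ^ 2 := hδdef
      nlinarith [mul_pos hα hN2, htδ', ht0, hδeq,
        mul_le_mul_of_nonneg_left ht2 (mul_pos hα hN2).le]
    have hm := hmin ((1 + t) • xhat) hfeas'
    -- expand the norm
    have hsplit : A ((1 + t) • xhat) - y = (A xhat - y) + t • A xhat := by
      rw [map_smul, add_smul, one_smul]
      abel
    have hinner : ⟪A xhat - y, t • A xhat⟫ = t * (-g) := by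
      rw [real_inner_smul_right, inner_sub_left, real_inner_self_eq_norm_sq]
      have : ⟪y, A xhat⟫ = M ^ 2 + g := by rw [← key]
      rw [this, hMdef]; ring
    have hexp : ‖A ((1 + t) • xhat) - y‖ ^ 2
        = ‖A xhat - y‖ ^ 2 + 2 * (t * (-g)) + t ^ 2 * M ^ 2 := by
      rw [hsplit, norm_add_sq_real, hinner, norm_smul, Real.norm_eq_abs,
        abs_of_pos ht0, mul_pow, hMdef]
    rw [hexp] at hm
    nlinarith [mul_pos ht0 hgpos, mul_pos ht0 ht0]
end

section
/- Let X and Y be real Hilbert spaces, let A : X → Y be a bounded linear operator with adjoint A*, let y ∈ Y with A*y ≠ 0, and let α > 0. Suppose x̂ ∈ X minimizes (1/2)‖Ax − y‖² over the set {x ∈ X : α‖x‖² ≤ ‖y‖²/4} and satisfies (A*A + αI) x̂ = A*y (i.e. the equivalent Tikhonov parameter equals the ADP parameter α). Then A x̂ = y/2, α x̂ = (1/2) A*y, and AA*y = α y; in particular y is a singular vector of A. -/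
open Filter Topology
open scoped RealInnerProductSpace

/-- Equality case of the parameter relation: if `A*y ≠ 0`, `xhat` minimizes
`(1/2)‖Ax − y‖²` over `{x : α‖x‖² ≤ ‖y‖²/4}` and satisfies `(A*A + αI) xhat = A*y`
(with the same `α > 0`), then `A xhat = y/2`, `α xhat = (1/2) A*y` and `AA*y = α y`,
i.e. `y` is a singular vector of `A`. -/
theorem adp_tikhonov_parameter_eq_singular
    {X Y : Type*} [NormedAddCommGroup X] [InnerProductSpace ℝ X] [CompleteSpace X]
    [NormedAddCommGroup Y] [InnerProductSpace ℝ Y] [CompleteSpace Y]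
    (A : X →L[ℝ] Y) (y : Y) (hAy : ContinuousLinearMap.adjoint A y ≠ 0)
    (α : ℝ) (hα : 0 < α)
    (xhat : X)
    (hfeas : α * ‖xhat‖ ^ 2 ≤ ‖y‖ ^ 2 / 4)
    (hmin : ∀ x : X, α * ‖x‖ ^ 2 ≤ ‖y‖ ^ 2 / 4 →
      (1 / 2) * ‖A xhat - y‖ ^ 2 ≤ (1 / 2) * ‖A x - y‖ ^ 2)
    (htik : ContinuousLinearMap.adjoint A (A xhat) + α • xhat =
      ContinuousLinearMap.adjoint A y) :
    A xhat = (1 / 2 : ℝ) • y ∧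
      α • xhat = (1 / 2 : ℝ) • ContinuousLinearMap.adjoint A y ∧
      A (ContinuousLinearMap.adjoint A y) = α • y := by
  set B := ContinuousLinearMap.adjoint A with hB
  -- xhat ≠ 0
  have hx0 : xhat ≠ 0 := by
    intro h
    apply hAy
    have h' := htik
    rw [h] at h'
    simpa using h'.symm
  have hxpos : 0 < ‖xhat‖ ^ 2 := pow_pos (norm_pos_iff.mpr hx0) 2
  -- key inner product identity
  have hkey : ⟪A xhat - y, A xhat⟫ = -(α * ‖xhat‖ ^ 2) := by
    have h1 : B (A xhat - y) = -(α • xhat) := by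
      rw [map_sub, ← htik]; abel
    calc ⟪A xhat - y, A xhat⟫ = ⟪B (A xhat - y), xhat⟫ :=
          (ContinuousLinearMap.adjoint_inner_left A _ _).symm
      _ = ⟪-(α • xhat), xhat⟫ := by rw [h1]
      _ = -(α * ‖xhat‖ ^ 2) := by
          rw [inner_neg_left, real_inner_smul_left, real_inner_self_eq_norm_sq]
  -- constraint is active
  have hact : α * ‖xhat‖ ^ 2 = ‖y‖ ^ 2 / 4 := by
    by_contra hne
    have hlt : α * ‖xhat‖ ^ 2 < ‖y‖ ^ 2 / 4 := lt_of_le_of_ne hfeas hne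
    set K := ‖A xhat‖ ^ 2 with hK
    set c := α * ‖xhat‖ ^ 2 with hc
    clear_value c
    have hKnn : 0 ≤ K := hK ▸ sq_nonneg _
    clear_value K
    have hcpos : 0 < c := by rw [hc]; exact mul_pos hα hxpos
    set t := min (min ((‖y‖ ^ 2 / 4 - c) / (3 * c)) 1) (c / (K + 1)) with ht
    clear_value t
    have htpos : 0 < t := by
      have ha : (0:ℝ) < (‖y‖ ^ 2 / 4 - c) / (3 * c) := div_pos (by linarith) (by linarith)
      have hb : (0:ℝ) < c / (K + 1) := div_pos hcpos (by linarith)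
      rw [ht]
      exact lt_min (lt_min ha one_pos) hb
    have ht1 : t ≤ 1 := by
      rw [ht]; exact le_trans (min_le_left _ _) (min_le_right _ _)
    have htK : t * (K + 1) ≤ c := by
      have this : t ≤ c / (K + 1) := by rw [ht]; exact min_le_right _ _
      calc t * (K + 1) ≤ (c / (K + 1)) * (K + 1) := by
            apply mul_le_mul_of_nonneg_right this (by linarith)
        _ = c := by field_simp
    have htfeas : t * (3 * c) ≤ ‖y‖ ^ 2 / 4 - c := by
      have h' : t ≤ (‖y‖ ^ 2 / 4 - c) / (3 * c) := by
        rw [ht]; exact le_trans (min_le_left _ _) (min_le_left _ _)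
      calc t * (3 * c) ≤ ((‖y‖ ^ 2 / 4 - c) / (3 * c)) * (3 * c) := by
            apply mul_le_mul_of_nonneg_right h' (by linarith)
        _ = ‖y‖ ^ 2 / 4 - c := by field_simp
    -- feasibility of (1+t) • xhat
    have hfeas' : α * ‖(1 + t) • xhat‖ ^ 2 ≤ ‖y‖ ^ 2 / 4 := by
      have : ‖(1 + t) • xhat‖ ^ 2 = (1 + t) ^ 2 * ‖xhat‖ ^ 2 := by
        rw [norm_smul, mul_pow, Real.norm_eq_abs, sq_abs]
      rw [this]
      have h2 : (1 + t) ^ 2 ≤ 1 + 3 * t := by nlinarith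
      calc α * ((1 + t) ^ 2 * ‖xhat‖ ^ 2) ≤ α * ((1 + 3 * t) * ‖xhat‖ ^ 2) := by
            apply mul_le_mul_of_nonneg_left _ hα.le
            exact mul_le_mul_of_nonneg_right h2 hxpos.le
        _ = c + t * (3 * c) := by rw [hc]; ring
        _ ≤ ‖y‖ ^ 2 / 4 := by linarith
    have hm := hmin ((1 + t) • xhat) hfeas'
    have hA : A ((1 + t) • xhat) = (A xhat - y) + t • A xhat + y := by
      rw [map_smul, add_smul, one_smul]; abel
    have hexp : ‖A ((1 + t) • xhat) - y‖ ^ 2 =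
        ‖A xhat - y‖ ^ 2 + 2 * (t * ⟪A xhat - y, A xhat⟫) + t ^ 2 * K := by
      rw [hA, add_sub_cancel_right, norm_add_sq_real, real_inner_smul_right,
        norm_smul, Real.norm_eq_abs, mul_pow, sq_abs, hK]
    rw [hexp, hkey] at hm
    have hq : 0 ≤ -(2 * (t * c)) + t ^ 2 * K := by linarith
    have h5 : t * K ≤ c - t := by ring_nf at htK ⊢; linarith
    have h6 : t * (t * K) ≤ t * (c - t) := mul_le_mul_of_nonneg_left h5 htpos.le
    have e1 : t ^ 2 * K = t * (t * K) := by ring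
    have e2 : t * (c - t) = t * c - t ^ 2 := by ring
    have := mul_pos htpos hcpos
    linarith [hq, e1, h6, e2, this, sq_nonneg t]
  -- A xhat = (1/2) y
  have hinner : ‖A xhat‖ ^ 2 + α * ‖xhat‖ ^ 2 = ⟪y, A xhat⟫ := by
    have := hkey
    rw [inner_sub_left, real_inner_self_eq_norm_sq] at this
    linarith
  have hzero : ‖A xhat - (1 / 2 : ℝ) • y‖ ^ 2 = 0 := by
    rw [norm_sub_sq_real, real_inner_smul_right, norm_smul, Real.norm_eq_abs, mul_pow, sq_abs,
      real_inner_comm]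
    rw [← hinner]
    linarith [hact]
  have h1 : A xhat = (1 / 2 : ℝ) • y := by
    have := pow_eq_zero_iff (n := 2) (by norm_num) |>.mp hzero
    rw [norm_eq_zero] at this
    exact sub_eq_zero.mp this
  -- second claim
  have h2 : α • xhat = (1 / 2 : ℝ) • B y := by
    have h := htik
    rw [h1, map_smul] at h
    have h' : α • xhat = B y - (1 / 2 : ℝ) • B y := eq_sub_of_add_eq' h
    rw [h']; module
  -- third claim
  have h3 : A (B y) = α • y := by
    have hs : (1 / 2 : ℝ) • A (B y) = (1 / 2 : ℝ) • (α • y) := by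
      rw [← map_smul, ← h2, map_smul, h1]
      module
    exact smul_right_injective Y (by norm_num : (1 / 2 : ℝ) ≠ 0) hs
  exact ⟨h1, h2, h3⟩
end

section
/- Let X and Y be real Hilbert spaces, let A : X → Y be a bounded linear operator, and let α > 0. Let (y_k) ⊂ Y be a sequence with y_k → ŷ in Y. Suppose that for each k, x_k ∈ X is the unique minimizer of x ↦ (1/2)‖Ax − y_k‖² over the set {x ∈ X : ‖x‖² ≤ ‖y_k‖²/(4α)} and satisfies ‖x_k‖² = ‖y_k‖²/(4α), and that x̂ ∈ X is the unique minimizer of x ↦ (1/2)‖Ax − ŷ‖² over {x ∈ X : ‖x‖² ≤ ‖ŷ‖²/(4α)} with ‖x̂‖² = ‖ŷ‖²/(4α). Then x_k → x̂ in the norm of X. -/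
set_option maxHeartbeats 1000000

open Filter Topology
open scoped RealInnerProductSpace

private lemma adp_midpoint_norm_sq {E : Type*} [NormedAddCommGroup E] [InnerProductSpace ℝ E]
    (u v : E) : ‖(2:ℝ)⁻¹ • (u + v)‖ ^ 2 = (‖u‖ ^ 2 + ‖v‖ ^ 2) / 2 - ‖u - v‖ ^ 2 / 4 := by
  have hp := parallelogram_law_with_norm ℝ u v
  have h1 : ‖(2:ℝ)⁻¹ • (u + v)‖ = (2:ℝ)⁻¹ * ‖u + v‖ := by
    rw [norm_smul]; norm_num
  rw [h1]; nlinarith [norm_nonneg (u + v), norm_nonneg (u - v)]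

/-- Stability of ADP: if `y_k → yhat`, each `x_k` is the unique minimizer of
`(1/2)‖Ax − y_k‖²` over `{x : ‖x‖² ≤ ‖y_k‖²/(4α)}` satisfying the constraint with
equality, and `xhat` is the unique minimizer for `yhat` with equality in the constraint,
then `x_k → xhat` in norm. -/
theorem adp_stability
    {X Y : Type*} [NormedAddCommGroup X] [InnerProductSpace ℝ X] [CompleteSpace X]
    [NormedAddCommGroup Y] [InnerProductSpace ℝ Y] [CompleteSpace Y]
    (A : X →L[ℝ] Y) (α : ℝ) (hα : 0 < α)
    (y : ℕ → Y) (yhat : Y) (hy : Tendsto y atTop (𝓝 yhat))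
    (x : ℕ → X) (xhat : X)
    (hxmin : ∀ k : ℕ, ‖x k‖ ^ 2 ≤ ‖y k‖ ^ 2 / (4 * α) ∧
      ∀ z : X, ‖z‖ ^ 2 ≤ ‖y k‖ ^ 2 / (4 * α) →
        (1 / 2) * ‖A (x k) - y k‖ ^ 2 ≤ (1 / 2) * ‖A z - y k‖ ^ 2)
    (hxuniq : ∀ (k : ℕ) (z : X),
      (‖z‖ ^ 2 ≤ ‖y k‖ ^ 2 / (4 * α) ∧
        ∀ w : X, ‖w‖ ^ 2 ≤ ‖y k‖ ^ 2 / (4 * α) →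
          (1 / 2) * ‖A z - y k‖ ^ 2 ≤ (1 / 2) * ‖A w - y k‖ ^ 2) → z = x k)
    (hxeq : ∀ k : ℕ, ‖x k‖ ^ 2 = ‖y k‖ ^ 2 / (4 * α))
    (hxhatmin : ‖xhat‖ ^ 2 ≤ ‖yhat‖ ^ 2 / (4 * α) ∧
      ∀ z : X, ‖z‖ ^ 2 ≤ ‖yhat‖ ^ 2 / (4 * α) →
        (1 / 2) * ‖A xhat - yhat‖ ^ 2 ≤ (1 / 2) * ‖A z - yhat‖ ^ 2)
    (hxhatuniq : ∀ z : X,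
      (‖z‖ ^ 2 ≤ ‖yhat‖ ^ 2 / (4 * α) ∧
        ∀ w : X, ‖w‖ ^ 2 ≤ ‖yhat‖ ^ 2 / (4 * α) →
          (1 / 2) * ‖A z - yhat‖ ^ 2 ≤ (1 / 2) * ‖A w - yhat‖ ^ 2) → z = xhat)
    (hxhateq : ‖xhat‖ ^ 2 = ‖yhat‖ ^ 2 / (4 * α)) :
    Tendsto x atTop (𝓝 xhat) := by
  by_cases hy0 : yhat = 0
  · -- trivial case : yhat = 0
    subst hy0
    have hx0 : xhat = 0 := by
      have h1 : ‖xhat‖ ^ 2 = 0 := by simpa using hxhateq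
      have h2 : ‖xhat‖ = 0 := by nlinarith [norm_nonneg xhat]
      simpa using h2
    rw [hx0, tendsto_zero_iff_norm_tendsto_zero]
    have h1 : Tendsto (fun k => ‖y k‖ ^ 2 / (4 * α)) atTop (𝓝 0) := by
      have := (hy.norm.pow 2).div_const (4 * α)
      simpa using this
    have h2 : Tendsto (fun k => ‖x k‖ ^ 2) atTop (𝓝 0) := by
      refine h1.congr fun k => (hxeq k).symm
    have h3 := h2.sqrt
    simpa [Real.sqrt_sq (norm_nonneg _)] using h3
  · -- main case
    have hynz : (0:ℝ) < ‖yhat‖ := norm_pos_iff.mpr hy0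
    have hyn : Tendsto (fun k => ‖y k‖) atTop (𝓝 ‖yhat‖) := hy.norm
    set r : ℝ := ‖yhat‖ ^ 2 / (4 * α) with hrdef
    have hr : 0 < r := by positivity
    set c : ℕ → ℝ := fun k => ‖y k‖ / ‖yhat‖ with hcdef
    have hc : Tendsto c atTop (𝓝 1) := by
      have := hyn.div_const ‖yhat‖
      simpa [div_self hynz.ne'] using this
    have hcnn : ∀ k, 0 ≤ c k := fun k => by positivity
    set w : ℕ → X := fun k => c k • xhat with hwdef
    have hw : Tendsto w atTop (𝓝 xhat) := by
      have := hc.smul_const xhat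
      simpa using this
    have hwfeas : ∀ k, ‖w k‖ ^ 2 = ‖y k‖ ^ 2 / (4 * α) := by
      intro k
      have : ‖w k‖ = c k * ‖xhat‖ := by
        rw [hwdef]; rw [norm_smul, Real.norm_eq_abs, abs_of_nonneg (hcnn k)]
      rw [this, mul_pow, hxhateq, hcdef]
      field_simp [hynz.ne', hα.ne']
      rw [hrdef]
      field_simp
    set z : ℕ → X := fun k => (c k)⁻¹ • x k with hzdef
    have hzfeas : ∀ k, ‖z k‖ ^ 2 ≤ r := by
      intro k
      by_cases hk : y k = 0
      · have h1 : ‖x k‖ ^ 2 = 0 := by simp [hxeq k, hk]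
        have h2 : x k = 0 := by
          have : ‖x k‖ = 0 := by nlinarith [norm_nonneg (x k)]
          simpa using this
        simp [hzdef, h2, hr.le]
      · have hck : c k ≠ 0 := by
          simp only [hcdef]
          exact div_ne_zero (norm_ne_zero_iff.mpr hk) hynz.ne'
        have h2 : ‖z k‖ ^ 2 = ((c k)⁻¹) ^ 2 * ‖x k‖ ^ 2 := by
          simp only [hzdef]
          rw [norm_smul, mul_pow, Real.norm_eq_abs, sq_abs]
        rw [h2, hxeq k, hcdef, hrdef]
        have hyk : ‖y k‖ ≠ 0 := norm_ne_zero_iff.mpr hk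
        apply le_of_eq
        field_simp
    -- eventual bound on ‖x k‖
    set C : ℝ := Real.sqrt ((‖yhat‖ + 1) ^ 2 / (4 * α)) with hCdef
    have hCnn : 0 ≤ C := Real.sqrt_nonneg _
    have hyb : ∀ᶠ k in atTop, ‖y k‖ < ‖yhat‖ + 1 := hyn.eventually_lt_const (by linarith)
    have hxC : ∀ᶠ k in atTop, ‖x k‖ ≤ C := by
      filter_upwards [hyb] with k hk
      have h1 : ‖x k‖ ^ 2 ≤ (‖yhat‖ + 1) ^ 2 / (4 * α) := by
        rw [hxeq k]
        exact (div_le_div_iff_of_pos_right (by positivity)).mpr (by nlinarith [norm_nonneg (y k)])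
      calc ‖x k‖ = Real.sqrt (‖x k‖ ^ 2) := (Real.sqrt_sq (norm_nonneg _)).symm
        _ ≤ C := Real.sqrt_le_sqrt h1
    -- objective values
    set m : ℝ := (1/2) * ‖A xhat - yhat‖ ^ 2 with hmdef
    set a : ℕ → ℝ := fun k => (1/2) * ‖A (x k) - y k‖ ^ 2 with hadef
    set b : ℕ → ℝ := fun k => (1/2) * ‖A (w k) - y k‖ ^ 2 with hbdef
    have hb : Tendsto b atTop (𝓝 m) := by
      have h1 : Tendsto (fun k => A (w k) - y k) atTop (𝓝 (A xhat - yhat)) :=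
        ((A.continuous.tendsto xhat).comp hw).sub hy
      have := (h1.norm.pow 2).const_mul (1/2 : ℝ)
      simpa [hbdef, hmdef] using this
    have hab : ∀ k, a k ≤ b k := fun k => (hxmin k).2 (w k) (le_of_eq (hwfeas k))
    have hFz : ∀ k, m ≤ (1/2) * ‖A (z k) - yhat‖ ^ 2 := fun k => hxhatmin.2 (z k) (hzfeas k)
    -- z k - x k → 0
    have hzx : Tendsto (fun k => z k - x k) atTop (𝓝 0) := by
      rw [tendsto_zero_iff_norm_tendsto_zero]
      have hcinv : Tendsto (fun k => (c k)⁻¹) atTop (𝓝 1) := by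
        simpa using hc.inv₀ one_ne_zero
      have hg : Tendsto (fun k => |(c k)⁻¹ - 1| * C) atTop (𝓝 0) := by
        have h1 : Tendsto (fun k => (c k)⁻¹ - 1) atTop (𝓝 0) := by
          simpa using hcinv.sub_const 1
        have := (h1.abs).mul_const C
        simpa using this
      have hle : ∀ᶠ k in atTop, ‖z k - x k‖ ≤ |(c k)⁻¹ - 1| * C := by
        filter_upwards [hxC] with k hk
        have h1 : z k - x k = ((c k)⁻¹ - 1) • x k := by
          simp only [hzdef, sub_smul, one_smul]
        rw [h1, norm_smul, Real.norm_eq_abs]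
        exact mul_le_mul_of_nonneg_left hk (abs_nonneg _)
      exact squeeze_zero' (Eventually.of_forall fun k => norm_nonneg _) hle hg
    have hs : Tendsto (fun k => (A (z k) - yhat) - (A (x k) - y k)) atTop (𝓝 0) := by
      have h1 : Tendsto (fun k => A (z k - x k)) atTop (𝓝 0) := by
        have := (A.continuous.tendsto 0).comp hzx
        simpa [Function.comp_def] using this
      have h2 : Tendsto (fun k => y k - yhat) atTop (𝓝 0) := by
        simpa using hy.sub_const yhat
      have h3 : (fun k => (A (z k) - yhat) - (A (x k) - y k))
          = fun k => A (z k - x k) + (y k - yhat) := by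
        funext k
        rw [map_sub]
        abel
      rw [h3]
      simpa using h1.add h2
    -- F(z k) - a k → 0
    have hdelta : Tendsto (fun k => (1/2) * ‖A (z k) - yhat‖ ^ 2 - a k) atTop (𝓝 0) := by
      set s : ℕ → Y := fun k => (A (z k) - yhat) - (A (x k) - y k) with hsdef
      have hid : ∀ k, (1/2) * ‖A (z k) - yhat‖ ^ 2 - a k
          = ⟪A (x k) - y k, s k⟫ + (1/2) * ‖s k‖ ^ 2 := by
        intro k
        have h1 : A (z k) - yhat = (A (x k) - y k) + s k := by
          simp only [hsdef]
          abel
        rw [h1, norm_add_sq_real]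
        simp only [hadef]
        ring
      set M : ℝ := ‖A‖ * C + (‖yhat‖ + 1) with hMdef
      have hpb : ∀ᶠ k in atTop, ‖A (x k) - y k‖ ≤ M := by
        filter_upwards [hxC, hyb] with k h1 h2
        calc ‖A (x k) - y k‖ ≤ ‖A (x k)‖ + ‖y k‖ := norm_sub_le _ _
          _ ≤ ‖A‖ * ‖x k‖ + ‖y k‖ := by gcongr; exact A.le_opNorm _
          _ ≤ M := by
              rw [hMdef]
              have h3 := mul_le_mul_of_nonneg_left h1 A.opNorm_nonneg
              linarith
      have hg : Tendsto (fun k => M * ‖s k‖ + (1/2) * ‖s k‖ ^ 2) atTop (𝓝 0) := by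
        have h1 : Tendsto (fun k => ‖s k‖) atTop (𝓝 0) := by simpa using hs.norm
        have := (h1.const_mul M).add ((h1.pow 2).const_mul (1/2 : ℝ))
        simpa using this
      have hbound : ∀ᶠ k in atTop, |(1/2) * ‖A (z k) - yhat‖ ^ 2 - a k|
          ≤ M * ‖s k‖ + (1/2) * ‖s k‖ ^ 2 := by
        filter_upwards [hpb] with k hk
        rw [hid k]
        have h1 : |⟪A (x k) - y k, s k⟫| ≤ ‖A (x k) - y k‖ * ‖s k‖ :=
          abs_real_inner_le_norm _ _
        have h2 : ‖A (x k) - y k‖ * ‖s k‖ ≤ M * ‖s k‖ :=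
          mul_le_mul_of_nonneg_right hk (norm_nonneg _)
        have h3 := abs_add_le (⟪A (x k) - y k, s k⟫) ((1/2) * ‖s k‖ ^ 2)
        have h4 : |(1/2) * ‖s k‖ ^ 2| = (1/2) * ‖s k‖ ^ 2 := abs_of_nonneg (by positivity)
        calc |⟪A (x k) - y k, s k⟫ + (1/2) * ‖s k‖ ^ 2|
            ≤ |⟪A (x k) - y k, s k⟫| + |(1/2) * ‖s k‖ ^ 2| := h3
          _ ≤ M * ‖s k‖ + (1/2) * ‖s k‖ ^ 2 := by
              rw [h4]
              exact add_le_add (h1.trans h2) le_rfl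
      have habs : Tendsto (fun k => |(1/2) * ‖A (z k) - yhat‖ ^ 2 - a k|) atTop (𝓝 0) :=
        squeeze_zero' (Eventually.of_forall fun k => abs_nonneg _) hbound hg
      exact tendsto_zero_iff_abs_tendsto_zero _ |>.mpr habs
    -- b k - a k → 0
    have hba : Tendsto (fun k => b k - a k) atTop (𝓝 0) := by
      have hupper : ∀ k, b k - a k
          ≤ (b k - m) + ((1/2) * ‖A (z k) - yhat‖ ^ 2 - a k) := by
        intro k
        have := hFz k
        linarith
      have hlim : Tendsto (fun k => (b k - m) + ((1/2) * ‖A (z k) - yhat‖ ^ 2 - a k))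
          atTop (𝓝 0) := by
        have := (hb.sub_const m).add hdelta
        simpa using this
      exact squeeze_zero' (Eventually.of_forall fun k => sub_nonneg.mpr (hab k))
        (Eventually.of_forall hupper) hlim
    -- midpoint inequality
    have hdineq : ∀ k, ‖A (x k) - A (w k)‖ ^ 2 ≤ 4 * (b k - a k) := by
      intro k
      have hmpfeas : ‖(2:ℝ)⁻¹ • (x k + w k)‖ ^ 2 ≤ ‖y k‖ ^ 2 / (4 * α) := by
        rw [adp_midpoint_norm_sq, hxeq k, hwfeas k]
        nlinarith [sq_nonneg ‖x k - w k‖]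
      have h2 := (hxmin k).2 _ hmpfeas
      have himg : A ((2:ℝ)⁻¹ • (x k + w k)) - y k
          = (2:ℝ)⁻¹ • ((A (x k) - y k) + (A (w k) - y k)) := by
        rw [map_smul, map_add]
        module
      rw [himg, adp_midpoint_norm_sq] at h2
      have h5 : (A (x k) - y k) - (A (w k) - y k) = A (x k) - A (w k) := by abel
      rw [h5] at h2
      simp only [hadef, hbdef] at h2 ⊢
      linarith [h2]
    have hd0 : Tendsto (fun k => ‖A (x k) - A (w k)‖ ^ 2) atTop (𝓝 0) := by
      apply squeeze_zero (fun k => sq_nonneg _) hdineq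
      simpa using hba.const_mul (4:ℝ)
    have hd1 : Tendsto (fun k => ‖A (x k) - A (w k)‖) atTop (𝓝 0) := by
      have := hd0.sqrt
      simpa [Real.sqrt_sq (norm_nonneg _)] using this
    have hAx : Tendsto (fun k => ‖A (x k) - A xhat‖) atTop (𝓝 0) := by
      have h2 : Tendsto (fun k => ‖A (w k) - A xhat‖) atTop (𝓝 0) := by
        have h3 : Tendsto (fun k => A (w k)) atTop (𝓝 (A xhat)) :=
          (A.continuous.tendsto xhat).comp hw
        have := tendsto_iff_norm_sub_tendsto_zero.mp h3
        simpa using this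
      have hle : ∀ k, ‖A (x k) - A xhat‖ ≤ ‖A (x k) - A (w k)‖ + ‖A (w k) - A xhat‖ :=
        fun k => norm_sub_le_norm_sub_add_norm_sub _ _ _
      exact squeeze_zero (fun k => norm_nonneg _) hle (by simpa using hd1.add h2)
    -- kernel orthogonality of xhat
    have hker : ∀ n : X, A n = 0 → ⟪xhat, n⟫ = 0 := by
      intro n hn
      by_contra hp
      have hn0 : n ≠ 0 := by
        rintro rfl
        simp at hp
      have hnn : (0:ℝ) < ‖n‖ ^ 2 := pow_pos (norm_pos_iff.mpr hn0) 2
      set t : ℝ := ⟪xhat, n⟫ / ‖n‖ ^ 2 with htdef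
      have ht0 : t ≠ 0 := div_ne_zero hp hnn.ne'
      have hfeas2 : ‖xhat - t • n‖ ^ 2 ≤ ‖yhat‖ ^ 2 / (4 * α) := by
        have h1 : ‖xhat - t • n‖ ^ 2
            = ‖xhat‖ ^ 2 - 2 * (t * ⟪xhat, n⟫) + t ^ 2 * ‖n‖ ^ 2 := by
          rw [norm_sub_sq_real, real_inner_smul_right, norm_smul, mul_pow,
            Real.norm_eq_abs, sq_abs]
        rw [h1, hxhateq, htdef]
        rw [hrdef]
        have h2 : (⟪xhat, n⟫ / ‖n‖ ^ 2) * ⟪xhat, n⟫ = ⟪xhat, n⟫ ^ 2 / ‖n‖ ^ 2 := by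
          field_simp
        have h3 : (⟪xhat, n⟫ / ‖n‖ ^ 2) ^ 2 * ‖n‖ ^ 2 = ⟪xhat, n⟫ ^ 2 / ‖n‖ ^ 2 := by
          field_simp
        rw [h2, h3]
        have h4 : 0 ≤ ⟪xhat, n⟫ ^ 2 / ‖n‖ ^ 2 := by positivity
        linarith
      have hAz : A (xhat - t • n) = A xhat := by
        rw [map_sub, map_smul, hn]
        simp
      have heq : xhat - t • n = xhat := by
        apply hxhatuniq
        refine ⟨hfeas2, fun u hu => ?_⟩
        rw [hAz]
        exact hxhatmin.2 u hu
      have : t • n = 0 := by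
        have := sub_eq_self.mp heq
        exact this
      rcases smul_eq_zero.mp this with h | h
      · exact ht0 h
      · exact hn0 h
    -- xhat lies in the closure of the range of the adjoint
    have hclos : xhat ∈ closure ((LinearMap.range (ContinuousLinearMap.adjoint A : Y →ₗ[ℝ] X) : Submodule ℝ X) : Set X) := by
      set K : Submodule ℝ X := LinearMap.range (ContinuousLinearMap.adjoint A : Y →ₗ[ℝ] X) with hKdef
      have h1 : xhat ∈ Kᗮᗮ := by
        rw [Submodule.mem_orthogonal]
        intro u hu
        have hAu : A u = 0 := by
          have h2 : ⟪ContinuousLinearMap.adjoint A (A u), u⟫ = 0 :=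
            hu _ ⟨A u, rfl⟩
          rw [ContinuousLinearMap.adjoint_inner_left] at h2
          exact inner_self_eq_zero.mp h2
        rw [real_inner_comm]
        exact hker u hAu
      rw [Submodule.orthogonal_orthogonal_eq_closure] at h1
      exact h1
    -- the inner products converge
    have hxhatnorm : ‖xhat‖ = Real.sqrt r := by
      rw [← hxhateq, Real.sqrt_sq (norm_nonneg _)]
    have hip : Tendsto (fun k => ⟪x k, xhat⟫) atTop (𝓝 r) := by
      rw [Metric.tendsto_atTop]
      intro ε hε
      set D : ℝ := C + Real.sqrt r + 1 with hDdef
      have hD : 0 < D := by positivity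
      obtain ⟨g, hgK, hgc⟩ := Metric.mem_closure_iff.mp hclos (ε / (4 * D)) (by positivity)
      obtain ⟨v, rfl⟩ := hgK
      have h1 : ∀ᶠ k in atTop, ‖A (x k) - A xhat‖ < ε / (2 * (‖v‖ + 1)) :=
        hAx.eventually_lt_const (by positivity)
      have h2 : ∀ᶠ k in atTop, dist ⟪x k, xhat⟫ r < ε := by
        filter_upwards [h1, hxC] with k hk1 hk2
        have hrx : ⟪xhat, xhat⟫ = r := by
          rw [real_inner_self_eq_norm_sq, hxhateq]
        have h3 : ⟪x k, xhat⟫ - r = ⟪x k - xhat, xhat⟫ := by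
          rw [inner_sub_left, hrx]
        have h4 : ⟪x k - xhat, xhat⟫
            = ⟪x k - xhat, xhat - ContinuousLinearMap.adjoint A v⟫
              + ⟪A (x k) - A xhat, v⟫ := by
          have e1 : A (x k) - A xhat = A (x k - xhat) := (map_sub A _ _).symm
          rw [e1, ← ContinuousLinearMap.adjoint_inner_right A, ← inner_add_right,
            sub_add_cancel]
        have h5 : |⟪x k - xhat, xhat - ContinuousLinearMap.adjoint A v⟫|
            ≤ D * (ε / (4 * D)) := by
          have h6 := abs_real_inner_le_norm (x k - xhat) (xhat - ContinuousLinearMap.adjoint A v)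
          have h7 : ‖x k - xhat‖ ≤ D := by
            calc ‖x k - xhat‖ ≤ ‖x k‖ + ‖xhat‖ := norm_sub_le _ _
              _ ≤ C + Real.sqrt r := by rw [hxhatnorm]; linarith
              _ ≤ D := by rw [hDdef]; linarith
          have h8 : ‖xhat - ContinuousLinearMap.adjoint A v‖ ≤ ε / (4 * D) := by
            have := hgc
            rw [dist_eq_norm] at this
            exact this.le
          calc |⟪x k - xhat, xhat - ContinuousLinearMap.adjoint A v⟫|
              ≤ ‖x k - xhat‖ * ‖xhat - ContinuousLinearMap.adjoint A v‖ := h6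
            _ ≤ D * (ε / (4 * D)) := by
                apply mul_le_mul h7 h8 (norm_nonneg _) hD.le
        have h9 : |⟪A (x k) - A xhat, v⟫| ≤ (ε / (2 * (‖v‖ + 1))) * ‖v‖ := by
          calc |⟪A (x k) - A xhat, v⟫| ≤ ‖A (x k) - A xhat‖ * ‖v‖ :=
              abs_real_inner_le_norm _ _
            _ ≤ (ε / (2 * (‖v‖ + 1))) * ‖v‖ := by
                apply mul_le_mul_of_nonneg_right hk1.le (norm_nonneg _)
        have h10 : D * (ε / (4 * D)) = ε / 4 := by field_simp
        have h11 : (ε / (2 * (‖v‖ + 1))) * ‖v‖ < ε / 2 := by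
          rw [div_mul_eq_mul_div, div_lt_iff₀ (by positivity)]
          nlinarith [norm_nonneg v]
        rw [Real.dist_eq, h3, h4]
        calc |⟪x k - xhat, xhat - ContinuousLinearMap.adjoint A v⟫
              + ⟪A (x k) - A xhat, v⟫|
            ≤ |⟪x k - xhat, xhat - ContinuousLinearMap.adjoint A v⟫|
              + |⟪A (x k) - A xhat, v⟫| := abs_add_le _ _
          _ < ε / 4 + ε / 2 := add_lt_add_of_le_of_lt (h5.trans_eq h10) (h9.trans_lt h11)
          _ ≤ ε := by linarith
      rw [eventually_atTop] at h2
      obtain ⟨N, hN⟩ := h2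
      exact ⟨N, hN⟩
    -- conclude
    have hxk2t : Tendsto (fun k => ‖x k‖ ^ 2) atTop (𝓝 r) := by
      have h1 := (hyn.pow 2).div_const (4 * α)
      exact h1.congr fun k => (hxeq k).symm
    have hfin2 : Tendsto (fun k => ‖x k - xhat‖ ^ 2) atTop (𝓝 0) := by
      have h2 : Tendsto (fun k => ‖x k‖ ^ 2 - 2 * ⟪x k, xhat⟫ + ‖xhat‖ ^ 2)
          atTop (𝓝 (r - 2 * r + ‖xhat‖ ^ 2)) :=
        (hxk2t.sub (hip.const_mul 2)).add_const _
      have h3 : r - 2 * r + ‖xhat‖ ^ 2 = 0 := by rw [hxhateq]; ring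
      rw [h3] at h2
      exact h2.congr fun k => (norm_sub_sq_real _ _).symm
    have hfin : Tendsto (fun k => ‖x k - xhat‖) atTop (𝓝 0) := by
      have h4 := hfin2.sqrt
      have h5 : (fun k => Real.sqrt (‖x k - xhat‖ ^ 2)) = fun k => ‖x k - xhat‖ :=
        funext fun k => Real.sqrt_sq (norm_nonneg _)
      rw [h5] at h4
      simpa using h4
    exact tendsto_iff_norm_sub_tendsto_zero.mpr hfin
end

section
/- Let X and Y be real Hilbert spaces, let A : X → Y be a bounded linear operator with adjoint A*, let R : X → ℝ be nonnegative and convex, let x† ∈ X and y† = A x†, let δ > 0 and y^δ ∈ Y with ‖y^δ − y†‖ ≤ δ, let α > 0, and let w ∈ Y with A*w ∈ ∂R(x†). Suppose B̂ : X → Y is a bounded linear operator and x̂ ∈ X is a minimizer of x ↦ (1/2)‖B̂x − y^δ‖² + αR(x). Then the Bregman-distance quantity d = R(x̂) − R(x†) − ⟨A*w, x̂ − x†⟩ satisfies d ≤ (1/(2α)) (‖x†‖·‖B̂ − A‖ + δ)² + ‖w‖·‖Ax̂ − y†‖, where ‖B̂ − A‖ is the operator norm. -/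
open Filter Topology
open scoped RealInnerProductSpace

/-- Bregman-distance estimate: under the source condition `A*w ∈ ∂R(x†)`,
if `xhat` minimizes `x ↦ (1/2)‖Bhat x − y^δ‖² + αR(x)`, then
`d = R(xhat) − R(x†) − ⟨A*w, xhat − x†⟩` satisfies
`d ≤ (1/(2α))(‖x†‖‖Bhat − A‖ + δ)² + ‖w‖‖A xhat − y†‖`. -/
theorem adp_beta_bregman_estimate
    {X Y : Type*} [NormedAddCommGroup X] [InnerProductSpace ℝ X] [CompleteSpace X]
    [NormedAddCommGroup Y] [InnerProductSpace ℝ Y] [CompleteSpace Y]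
    (A : X →L[ℝ] Y)
    (R : X → ℝ) (hR0 : ∀ x, 0 ≤ R x) (hRconv : ConvexOn ℝ Set.univ R)
    (xdag : X) (ydag : Y) (hydag : ydag = A xdag)
    (δ : ℝ) (hδ : 0 < δ) (yδ : Y) (hyδ : ‖yδ - ydag‖ ≤ δ)
    (α : ℝ) (hα : 0 < α)
    (w : Y)
    (hsource : ∀ z : X, R xdag + ⟪ContinuousLinearMap.adjoint A w, z - xdag⟫ ≤ R z)
    (Bhat : X →L[ℝ] Y) (xhat : X)
    (hxhat : ∀ x : X, (1 / 2) * ‖Bhat xhat - yδ‖ ^ 2 + α * R xhat ≤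
      (1 / 2) * ‖Bhat x - yδ‖ ^ 2 + α * R x) :
    R xhat - R xdag - ⟪ContinuousLinearMap.adjoint A w, xhat - xdag⟫ ≤
      (1 / (2 * α)) * (‖xdag‖ * ‖Bhat - A‖ + δ) ^ 2 + ‖w‖ * ‖A xhat - ydag‖ := by
  have h1 := hxhat xdag
  -- bound on ‖Bhat xdag - yδ‖
  have hc : ‖Bhat xdag - yδ‖ ≤ ‖xdag‖ * ‖Bhat - A‖ + δ := by
    have heq : Bhat xdag - yδ = (Bhat - A) xdag + (ydag - yδ) := by
      simp only [ContinuousLinearMap.sub_apply, hydag]; abel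
    calc ‖Bhat xdag - yδ‖ = ‖(Bhat - A) xdag + (ydag - yδ)‖ := by rw [heq]
      _ ≤ ‖(Bhat - A) xdag‖ + ‖ydag - yδ‖ := norm_add_le _ _
      _ ≤ ‖Bhat - A‖ * ‖xdag‖ + δ := by
          gcongr
          · exact (Bhat - A).le_opNorm xdag
          · rwa [norm_sub_rev]
      _ = ‖xdag‖ * ‖Bhat - A‖ + δ := by ring
  have hcnn : (0:ℝ) ≤ ‖xdag‖ * ‖Bhat - A‖ + δ := by positivity
  have hsq : ‖Bhat xdag - yδ‖ ^ 2 ≤ (‖xdag‖ * ‖Bhat - A‖ + δ) ^ 2 := by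
    exact pow_le_pow_left₀ (norm_nonneg _) hc 2
  have hinner : ⟪ContinuousLinearMap.adjoint A w, xhat - xdag⟫ = ⟪w, A xhat - ydag⟫ := by
    rw [ContinuousLinearMap.adjoint_inner_left]
    simp [hydag]
  have hib : -(‖w‖ * ‖A xhat - ydag‖) ≤ ⟪w, A xhat - ydag⟫ := by
    have := abs_real_inner_le_norm w (A xhat - ydag)
    cases abs_le.mp this with
    | intro h _ => linarith
  have hn : (0:ℝ) ≤ ‖Bhat xhat - yδ‖ ^ 2 := by positivity
  rw [hinner]
  rw [div_mul_eq_mul_div, one_mul, ← sub_le_iff_le_add, le_div_iff₀ (by positivity : (0:ℝ) < 2 * α)]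
  nlinarith [hib, h1, hsq, hn]
end

section
/- Let X and Y be real Hilbert spaces, let A : X → Y be a bounded linear operator with adjoint A*, let R : X → ℝ be nonnegative and convex, let x† ∈ X and y† = A x†, let δ > 0 and y^δ ∈ Y with ‖y^δ − y†‖ ≤ δ, let α > 0, and let w ∈ Y with A*w ∈ ∂R(x†). If x_α ∈ X is a minimizer of x ↦ (1/2)‖Ax − y^δ‖² + αR(x), then ‖A x_α − y^δ‖ ≤ δ + 2α‖w‖. -/
open Filter Topology
open scoped RealInnerProductSpace

/-- Classical residual bound for Tikhonov regularization under the source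
condition `A*w ∈ ∂R(x†)`: if `x_α` minimizes `x ↦ (1/2)‖Ax − y^δ‖² + αR(x)`, then
`‖A x_α − y^δ‖ ≤ δ + 2α‖w‖`. -/
theorem tikhonov_residual_bound
    {X Y : Type*} [NormedAddCommGroup X] [InnerProductSpace ℝ X] [CompleteSpace X]
    [NormedAddCommGroup Y] [InnerProductSpace ℝ Y] [CompleteSpace Y]
    (A : X →L[ℝ] Y)
    (R : X → ℝ) (hR0 : ∀ x, 0 ≤ R x) (hRconv : ConvexOn ℝ Set.univ R)
    (xdag : X) (ydag : Y) (hydag : ydag = A xdag)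
    (δ : ℝ) (hδ : 0 < δ) (yδ : Y) (hyδ : ‖yδ - ydag‖ ≤ δ)
    (α : ℝ) (hα : 0 < α)
    (w : Y)
    (hsource : ∀ z : X, R xdag + ⟪ContinuousLinearMap.adjoint A w, z - xdag⟫ ≤ R z)
    (xα : X)
    (hxα : ∀ x : X, (1 / 2) * ‖A xα - yδ‖ ^ 2 + α * R xα ≤
      (1 / 2) * ‖A x - yδ‖ ^ 2 + α * R x) :
    ‖A xα - yδ‖ ≤ δ + 2 * α * ‖w‖ := by
  set r := ‖A xα - yδ‖ with hr
  have hr0 : 0 ≤ r := norm_nonneg _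
  have hw0 : 0 ≤ ‖w‖ := norm_nonneg _
  -- data fidelity at xdag
  have hdagδ : ‖A xdag - yδ‖ ≤ δ := by
    rw [← norm_neg]; simpa [hydag, neg_sub] using hyδ
  have h1 := hxα xdag
  -- source condition at xα
  have h2 := hsource xα
  have hadj : ⟪ContinuousLinearMap.adjoint A w, xα - xdag⟫ = ⟪w, A xα - yδ⟫ + ⟪w, yδ - ydag⟫ := by
    rw [ContinuousLinearMap.adjoint_inner_left, ← inner_add_right]
    congr 1
    rw [hydag, map_sub]
    abel
  rw [hadj] at h2
  have hb1 : |⟪w, A xα - yδ⟫| ≤ ‖w‖ * r := by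
    simpa [hr] using abs_real_inner_le_norm w (A xα - yδ)
  have hb2 : |⟪w, yδ - ydag⟫| ≤ ‖w‖ * δ := by
    calc |⟪w, yδ - ydag⟫| ≤ ‖w‖ * ‖yδ - ydag‖ := abs_real_inner_le_norm _ _
    _ ≤ ‖w‖ * δ := by nlinarith
  have hsq : ‖A xdag - yδ‖ ^ 2 ≤ δ ^ 2 := by nlinarith [norm_nonneg (A xdag - yδ)]
  have habs1 := abs_le.mp hb1
  have habs2 := abs_le.mp hb2
  -- key inequality: r^2 ≤ δ^2 + 2α‖w‖(r + δ)
  have key : r ^ 2 ≤ δ ^ 2 + 2 * α * ‖w‖ * (r + δ) := by nlinarith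
  nlinarith [mul_nonneg hr0 hδ.le, sq_nonneg (r - δ)]
end

section
/- Let X and Y be real Hilbert spaces, let A : X → Y be a bounded linear operator with adjoint A*, let R : X → ℝ be nonnegative, convex, coercive and weakly sequentially lower semicontinuous, let x† ∈ X and y† = A x†, and let w ∈ Y with A*w ∈ ∂R(x†) (source condition). Fix c > 0 and β > 0 and set K = 1 + 2c‖w‖ and C = (1/(2c)) (‖x†‖ K / √(2β) + 1)² + ‖w‖ (K + 1). Then for every δ > 0, setting α = cδ, the following holds: if y^δ ∈ Y satisfies ‖y^δ − y†‖ ≤ δ, x_A ∈ X is a minimizer of x ↦ (1/2)‖Ax − y^δ‖² + αR(x), B̂ : X → Y is a bounded linear operator, and x̂ ∈ X is a minimizer of x ↦ (1/2)‖B̂x − y^δ‖² + αR(x) with (1/2)‖Ax̂ − y^δ‖² + β‖B̂ − A‖² ≤ (1/2)‖Ax_A − y^δ‖² (ADP-β minimality compared against B = A), then the Bregman-distance quantity d = R(x̂) − R(x†) − ⟨A*w, x̂ − x†⟩ satisfies d ≤ C·δ; in particular d = O(δ) for the parameter choice α proportional to δ. -/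
open Filter Topology
open scoped RealInnerProductSpace

private lemma le_of_sq_le_sq' {a b : ℝ} (_ : 0 ≤ a) (hb : 0 ≤ b) (h : a^2 ≤ b^2) : a ≤ b := by
  nlinarith

set_option maxHeartbeats 1000000 in
/-- Convergence of ADP-β: under the source condition `A*w ∈ ∂R(x†)`, with
the parameter choice `α = cδ`, the Bregman-distance quantity of the ADP-β solution is
bounded by `C·δ` with `K = 1 + 2c‖w‖`, `C = (1/(2c))(‖x†‖K/√(2β) + 1)² + ‖w‖(K + 1)`. -/
theorem adp_beta_convergence
    {X Y : Type*} [NormedAddCommGroup X] [InnerProductSpace ℝ X] [CompleteSpace X]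
    [NormedAddCommGroup Y] [InnerProductSpace ℝ Y] [CompleteSpace Y]
    (A : X →L[ℝ] Y)
    (R : X → ℝ) (hR0 : ∀ x, 0 ≤ R x)
    (hRconv : ConvexOn ℝ Set.univ R)
    (hRcoer : ∀ x : ℕ → X, Tendsto (fun k => ‖x k‖) atTop atTop →
      Tendsto (fun k => R (x k)) atTop atTop)
    (hRwlsc : ∀ (x : ℕ → X) (x₀ : X),
      (∀ v : X, Tendsto (fun k => ⟪v, x k⟫) atTop (𝓝 ⟪v, x₀⟫)) →
      R x₀ ≤ atTop.liminf (fun k => R (x k)))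
    (xdag : X) (ydag : Y) (hydag : ydag = A xdag)
    (w : Y)
    (hsource : ∀ z : X, R xdag + ⟪ContinuousLinearMap.adjoint A w, z - xdag⟫ ≤ R z)
    (c β : ℝ) (hc : 0 < c) (hβ : 0 < β) :
    ∀ δ : ℝ, 0 < δ →
      ∀ (yδ : Y), ‖yδ - ydag‖ ≤ δ →
        ∀ xA : X,
          (∀ x : X, (1 / 2) * ‖A xA - yδ‖ ^ 2 + (c * δ) * R xA ≤
            (1 / 2) * ‖A x - yδ‖ ^ 2 + (c * δ) * R x) →
          ∀ (Bhat : X →L[ℝ] Y) (xhat : X),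
            (∀ x : X, (1 / 2) * ‖Bhat xhat - yδ‖ ^ 2 + (c * δ) * R xhat ≤
              (1 / 2) * ‖Bhat x - yδ‖ ^ 2 + (c * δ) * R x) →
            (1 / 2) * ‖A xhat - yδ‖ ^ 2 + β * ‖Bhat - A‖ ^ 2 ≤
              (1 / 2) * ‖A xA - yδ‖ ^ 2 →
            R xhat - R xdag - ⟪ContinuousLinearMap.adjoint A w, xhat - xdag⟫ ≤
              ((1 / (2 * c)) * (‖xdag‖ * (1 + 2 * c * ‖w‖) / Real.sqrt (2 * β) + 1) ^ 2 +
                ‖w‖ * ((1 + 2 * c * ‖w‖) + 1)) * δ := by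
  intro δ hδ yδ hyδ xA hxA Bhat xhat hxhat hADP
  have hW : (0:ℝ) ≤ ‖w‖ := norm_nonneg w
  have hadj : ∀ v : X, ⟪ContinuousLinearMap.adjoint A w, v⟫ = ⟪w, A v⟫ := fun v =>
    ContinuousLinearMap.adjoint_inner_left A v w
  -- noise level bound on ‖A x† - yδ‖
  have hAxdag : ‖A xdag - yδ‖ ≤ δ := by
    have e : A xdag - yδ = -(yδ - ydag) := by rw [hydag]; abel
    rw [e, norm_neg]; exact hyδ
  -- generic inner-product bound
  have hib : ∀ u : X, ⟪w, A xdag - A u⟫ ≤ ‖w‖ * (δ + ‖A u - yδ‖) := by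
    intro u
    have e : A xdag - A u = (A xdag - yδ) + (yδ - A u) := by abel
    have h1 : ⟪w, A xdag - yδ⟫ ≤ ‖w‖ * δ :=
      le_trans (real_inner_le_norm _ _) (mul_le_mul_of_nonneg_left hAxdag hW)
    have h2 : ⟪w, yδ - A u⟫ ≤ ‖w‖ * ‖A u - yδ‖ := by
      have h := real_inner_le_norm w (yδ - A u)
      rwa [norm_sub_rev] at h
    rw [e, inner_add_right]
    nlinarith
  -- Step 1: ‖A xA - yδ‖ ≤ (1 + 2c‖w‖) δ
  have h1 := hxA xdag
  have hs1 : R xdag - R xA ≤ ⟪w, A xdag - A xA⟫ := by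
    have hs := hsource xA
    have e : ⟪ContinuousLinearMap.adjoint A w, xA - xdag⟫ = ⟪w, A xA - A xdag⟫ := by
      rw [hadj, map_sub]
    have e2 : ⟪w, A xA - A xdag⟫ = -⟪w, A xdag - A xA⟫ := by
      rw [← inner_neg_right]; congr 1; abel
    linarith [hs, e, e2]
  have ht0 : (0:ℝ) ≤ ‖A xA - yδ‖ := norm_nonneg _
  have hsq : ‖A xdag - yδ‖^2 ≤ δ^2 := by nlinarith [norm_nonneg (A xdag - yδ)]
  have hcomb : (1/2) * ‖A xA - yδ‖^2 ≤ (1/2)*δ^2 + c*δ*(‖w‖*(δ + ‖A xA - yδ‖)) := by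
    have hmul : (c*δ) * (R xdag - R xA) ≤ (c*δ) * (‖w‖*(δ + ‖A xA - yδ‖)) :=
      mul_le_mul_of_nonneg_left (le_trans hs1 (hib xA)) (by positivity)
    nlinarith [h1, hsq, hmul]
  have ht : ‖A xA - yδ‖ ≤ (1 + 2*c*‖w‖) * δ := by
    nlinarith [hcomb, (show (0:ℝ) < ‖A xA - yδ‖ + δ by linarith)]
  -- Step 2: bounds from ADP-β minimality
  have hsq2 : ‖A xA - yδ‖^2 ≤ ((1 + 2*c*‖w‖)*δ)^2 := by nlinarith [ht, ht0]
  have hKδ0 : (0:ℝ) ≤ (1 + 2*c*‖w‖)*δ := by positivity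
  have hAxhat : ‖A xhat - yδ‖ ≤ (1 + 2*c*‖w‖)*δ := by
    apply le_of_sq_le_sq' (norm_nonneg _) hKδ0
    nlinarith [hADP, hsq2, mul_nonneg hβ.le (sq_nonneg ‖Bhat - A‖)]
  have hs0 : 0 < Real.sqrt (2*β) := Real.sqrt_pos.mpr (by linarith)
  have hB : ‖Bhat - A‖ ≤ (1 + 2*c*‖w‖)*δ / Real.sqrt (2*β) := by
    apply le_of_sq_le_sq' (norm_nonneg _) (by positivity)
    have hr : ((1 + 2*c*‖w‖)*δ / Real.sqrt (2*β))^2 = ((1 + 2*c*‖w‖)*δ)^2 / (2*β) := by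
      rw [div_pow, Real.sq_sqrt (by linarith)]
    rw [hr, le_div_iff₀ (by linarith : (0:ℝ) < 2*β)]
    nlinarith [hADP, hsq2, sq_nonneg ‖A xhat - yδ‖]
  -- Step 3: bound on ‖Bhat x† - yδ‖
  have hBx : ‖Bhat xdag - yδ‖ ≤
      δ * (‖xdag‖ * (1 + 2*c*‖w‖) / Real.sqrt (2*β) + 1) := by
    have e : Bhat xdag - yδ = (Bhat - A) xdag + (A xdag - yδ) := by
      simp [ContinuousLinearMap.sub_apply]
    calc ‖Bhat xdag - yδ‖ ≤ ‖(Bhat - A) xdag‖ + ‖A xdag - yδ‖ := by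
          rw [e]; exact norm_add_le _ _
      _ ≤ ‖Bhat - A‖ * ‖xdag‖ + δ := add_le_add ((Bhat - A).le_opNorm xdag) hAxdag
      _ ≤ ((1 + 2*c*‖w‖)*δ / Real.sqrt (2*β)) * ‖xdag‖ + δ :=
          add_le_add (mul_le_mul_of_nonneg_right hB (norm_nonneg _)) le_rfl
      _ = δ * (‖xdag‖ * (1 + 2*c*‖w‖) / Real.sqrt (2*β) + 1) := by ring
  -- Step 4: minimality of xhat compared with x†
  have hM0 : (0:ℝ) ≤ ‖xdag‖ * (1 + 2*c*‖w‖) / Real.sqrt (2*β) + 1 := by positivity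
  have h3' : c*δ*(R xhat - R xdag) ≤
      (1/2) * (δ * (‖xdag‖ * (1 + 2*c*‖w‖) / Real.sqrt (2*β) + 1))^2 := by
    have h3 := hxhat xdag
    have hb2 : ‖Bhat xdag - yδ‖^2 ≤
        (δ * (‖xdag‖ * (1 + 2*c*‖w‖) / Real.sqrt (2*β) + 1))^2 := by
      nlinarith [hBx, norm_nonneg (Bhat xdag - yδ)]
    nlinarith [h3, hb2, sq_nonneg ‖Bhat xhat - yδ‖]
  have hdiv : R xhat - R xdag ≤
      (1/(2*c)) * (‖xdag‖ * (1 + 2*c*‖w‖) / Real.sqrt (2*β) + 1)^2 * δ := by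
    have e : (1/(2*c)) * (‖xdag‖ * (1 + 2*c*‖w‖) / Real.sqrt (2*β) + 1)^2 * δ =
        (1/2) * (δ * (‖xdag‖ * (1 + 2*c*‖w‖) / Real.sqrt (2*β) + 1))^2 / (c*δ) := by
      field_simp
    rw [e, le_div_iff₀ (mul_pos hc hδ)]
    nlinarith [h3']
  -- bound the inner-product term
  have key2 : -⟪ContinuousLinearMap.adjoint A w, xhat - xdag⟫ ≤
      ‖w‖ * ((1 + 2*c*‖w‖) + 1) * δ := by
    have e : ⟪ContinuousLinearMap.adjoint A w, xhat - xdag⟫ = ⟪w, A xhat - A xdag⟫ := by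
      rw [hadj, map_sub]
    have e2 : -⟪w, A xhat - A xdag⟫ = ⟪w, A xdag - A xhat⟫ := by
      rw [← inner_neg_right]; congr 1; abel
    have hb := hib xhat
    have h4 : ‖w‖ * (δ + ‖A xhat - yδ‖) ≤ ‖w‖ * (δ + (1 + 2*c*‖w‖)*δ) :=
      mul_le_mul_of_nonneg_left (by linarith) hW
    have : -⟪ContinuousLinearMap.adjoint A w, xhat - xdag⟫ = ⟪w, A xdag - A xhat⟫ := by
      rw [e]; exact e2
    rw [this]
    nlinarith [hb, h4]
  linarith [hdiv, key2]
end
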